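/- arXiv:math/0204131 — 5 statements merged into one kernel-verified Lean document; each statement's English description precedes it below -/
import Mathlib

section
/- If X and Y are disjoint nonempty sets and T : X → Y is a surjective map, then there exist compact Hausdorff topologies on X and Y such that T is continuous. -/
open Set Filter Topology

section Aux

variable {X Y : Type*} (T : X → Y) (s : Y → X) (y0 : Y)

/-- One-point-cofinite topology at `y0`. -/
def tYd : TopologicalSpace Y where
  IsOpen V := y0 ∈ V → Vᶜ.Finite
  isOpen_univ := by simp
  isOpen_inter U V hU hV h := by
    rw [Set.compl_inter]
    exact (hU h.1).union (hV h.2)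
  isOpen_sUnion S hS h := by
    obtain ⟨V, hVS, hyV⟩ := h
    exact (hS V hVS hyV).subset (compl_subset_compl.2 (subset_sUnion_of_mem hVS))

/-- Fiberwise one-point-cofinite topology glued at `s y0`. -/
def tXd : TopologicalSpace X where
  IsOpen U := (∀ y, s y ∈ U → (T ⁻¹' {y} \ U).Finite) ∧
    (s y0 ∈ U → ∃ C : Set Y, Cᶜ.Finite ∧ T ⁻¹' C ⊆ U)
  isOpen_univ := ⟨fun y _ => by simp, fun _ => ⟨univ, by simp, subset_univ _⟩⟩
  isOpen_inter U V hU hV := by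
    refine ⟨fun y hy => ?_, fun hy => ?_⟩
    · have : T ⁻¹' {y} \ (U ∩ V) ⊆ (T ⁻¹' {y} \ U) ∪ (T ⁻¹' {y} \ V) := by
        intro x hx
        simp only [mem_diff, mem_inter_iff, not_and_or, mem_union] at hx ⊢
        tauto
      exact ((hU.1 y hy.1).union (hV.1 y hy.2)).subset this
    · obtain ⟨C1, hC1, hC1U⟩ := hU.2 hy.1
      obtain ⟨C2, hC2, hC2V⟩ := hV.2 hy.2
      refine ⟨C1 ∩ C2, by rw [Set.compl_inter]; exact hC1.union hC2, ?_⟩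
      exact fun x hx => ⟨hC1U hx.1, hC2V hx.2⟩
  isOpen_sUnion S hS := by
    refine ⟨fun y hy => ?_, fun hy => ?_⟩
    · obtain ⟨U, hUS, hyU⟩ := hy
      exact ((hS U hUS).1 y hyU).subset fun x hx =>
        ⟨hx.1, fun hxU => hx.2 ⟨U, hUS, hxU⟩⟩
    · obtain ⟨U, hUS, hyU⟩ := hy
      obtain ⟨C, hC, hCU⟩ := (hS U hUS).2 hyU
      exact ⟨C, hC, fun x hx => ⟨U, hUS, hCU hx⟩⟩

theorem isOpenY_iff (V : Set Y) : IsOpen[tYd y0] V ↔ (y0 ∈ V → Vᶜ.Finite) := Iff.rfl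

theorem isOpenX_iff (U : Set X) : IsOpen[tXd T s y0] U ↔
    ((∀ y, s y ∈ U → (T ⁻¹' {y} \ U).Finite) ∧
      (s y0 ∈ U → ∃ C : Set Y, Cᶜ.Finite ∧ T ⁻¹' C ⊆ U)) := Iff.rfl

variable (hs : ∀ y, T (s y) = y)

include hs

/-- A singleton at a non-section point is open. -/
theorem open_singleton {x : X} (hx : x ≠ s (T x)) : IsOpen[tXd T s y0] {x} := by
  rw [isOpenX_iff]
  constructor
  · intro y hy
    exfalso
    have : s y = x := hy
    apply hx
    rw [← this, hs y]
  · intro hy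
    exfalso
    have : s y0 = x := hy
    apply hx
    rw [← this, hs y0]

/-- Fiber minus a finite set is open, for fibers away from `y0`. -/
theorem open_fiber {y : Y} (hy : y ≠ y0) (F : Set X) (hF : F.Finite) :
    IsOpen[tXd T s y0] (T ⁻¹' {y} \ F) := by
  rw [isOpenX_iff]
  constructor
  · intro y' hy'
    have hyy' : y' = y := by
      have : T (s y') ∈ ({y} : Set Y) := hy'.1
      rw [hs] at this; exact this
    subst hyy'
    exact hF.subset fun x hx => by
      by_contra hxF
      exact hx.2 ⟨hx.1, hxF⟩
  · intro hc
    exfalso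
    have : T (s y0) ∈ ({y} : Set Y) := hc.1
    rw [hs] at this
    exact hy this.symm
/-- Preimage of a cofinite set minus a finite set is open. -/
theorem open_cofinite (C : Set Y) (hC : Cᶜ.Finite) (F : Set X) (hF : F.Finite) :
    IsOpen[tXd T s y0] (T ⁻¹' C \ F) := by
  rw [isOpenX_iff]
  constructor
  · intro y' hy'
    have hy'C : y' ∈ C := by
      have : T (s y') ∈ C := hy'.1
      rwa [hs] at this
    refine hF.subset fun x hx => ?_
    by_contra hxF
    refine hx.2 ⟨?_, hxF⟩
    have h4 : T x = y' := hx.1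
    show T x ∈ C
    rw [h4]; exact hy'C
  · intro _
    refine ⟨C \ T '' F, ?_, ?_⟩
    · have : (C \ T '' F)ᶜ = Cᶜ ∪ T '' F := by
        rw [Set.diff_eq, Set.compl_inter, compl_compl]
      rw [this]
      exact hC.union (hF.image T)
    · intro x hx
      refine ⟨hx.1, fun hxF => hx.2 ⟨x, hxF, rfl⟩⟩

/-- T1-type separation: an open set around `a` missing `b`. -/
theorem t1_aux {a b : X} (hab : a ≠ b) :
    ∃ U : Set X, IsOpen[tXd T s y0] U ∧ a ∈ U ∧ b ∉ U := by
  by_cases hsp : a = s (T a)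
  · by_cases hy : T a = y0
    · refine ⟨T ⁻¹' univ \ {b}, open_cofinite T s y0 hs univ (by simp) {b} (finite_singleton b),
        ⟨mem_univ _, by simpa using hab⟩, fun h => h.2 rfl⟩
    · refine ⟨T ⁻¹' {T a} \ {b}, open_fiber T s y0 hs hy {b} (finite_singleton b),
        ⟨rfl, by simpa using hab⟩, fun h => h.2 rfl⟩
  · exact ⟨{a}, open_singleton T s y0 hs hsp, rfl, fun h => hab (h : b = a).symm⟩

theorem t2X : @T2Space X (tXd T s y0) := by
  letI := tXd T s y0
  constructor
  intro a b hab
  by_cases hb : b = s (T b)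
  · by_cases ha : a = s (T a)
    · -- both are section points, in distinct fibers
      have hTab : T a ≠ T b := fun h => hab (by rw [ha, h, ← hb])
      by_cases hya : T a = y0
      · refine ⟨T ⁻¹' {T b}ᶜ, T ⁻¹' {T b}, ?_, ?_, by simpa using hTab, rfl, ?_⟩
        · have := open_cofinite T s y0 hs {T b}ᶜ (by simp) ∅ finite_empty
          simpa using this
        · have := open_fiber T s y0 hs (fun h => hTab (hya.trans h.symm)) ∅ finite_empty
          simpa using this
        · rw [show T ⁻¹' {T b}ᶜ = (T ⁻¹' {T b})ᶜ from preimage_compl]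
          exact disjoint_compl_left
      · by_cases hyb : T b = y0
        · refine ⟨T ⁻¹' {T a}, T ⁻¹' {T a}ᶜ, ?_, ?_, rfl, by simpa using (Ne.symm hTab), ?_⟩
          · have := open_fiber T s y0 hs hya ∅ finite_empty
            simpa using this
          · have := open_cofinite T s y0 hs {T a}ᶜ (by simp) ∅ finite_empty
            simpa using this
          · rw [show T ⁻¹' {T a}ᶜ = (T ⁻¹' {T a})ᶜ from preimage_compl]
            exact disjoint_compl_right
        · refine ⟨T ⁻¹' {T a}, T ⁻¹' {T b}, ?_, ?_, rfl, rfl, ?_⟩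
          · have := open_fiber T s y0 hs hya ∅ finite_empty
            simpa using this
          · have := open_fiber T s y0 hs hyb ∅ finite_empty
            simpa using this
          · rw [Set.disjoint_iff]
            intro x hx
            exact hTab ((hx.1 : T x = T a).symm.trans (hx.2 : T x = T b))
    · -- a is not a section point: {a} is open
      obtain ⟨V, hV, hbV, haV⟩ := t1_aux T s y0 hs (Ne.symm hab)
      exact ⟨{a}, V, open_singleton T s y0 hs ha, hV, rfl, hbV,
        Set.disjoint_left.2 fun x hx => by rw [(hx : x = a)]; exact haV⟩
  · obtain ⟨U, hU, haU, hbU⟩ := t1_aux T s y0 hs hab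
    exact ⟨U, {b}, hU, open_singleton T s y0 hs hb, haU, rfl,
      Set.disjoint_right.2 fun x hx => by rw [(hx : x = b)]; exact hbU⟩

theorem contT : Continuous[tXd T s y0, tYd y0] T := by
  refine continuous_def.2 fun V hV => ?_
  rw [isOpenX_iff]
  constructor
  · intro y hy
    have hyV : y ∈ V := by rw [← hs y]; exact hy
    have : T ⁻¹' {y} \ T ⁻¹' V = ∅ := by
      ext x
      simp only [mem_diff, mem_preimage, mem_singleton_iff, mem_empty_iff_false,
        iff_false, not_and]
      intro h h2; exact h2 (h ▸ hyV)
    rw [this]; exact finite_empty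
  · intro hy
    have hy0 : y0 ∈ V := by rw [← hs y0]; exact hy
    exact ⟨V, hV hy0, subset_rfl⟩

end Aux

section AuxY

variable {Y : Type*} (y0 : Y)

theorem t2Y : @T2Space Y (tYd y0) := by
  letI := tYd (Y := Y) y0
  constructor
  intro a b hab
  by_cases ha : a = y0
  · refine ⟨{b}ᶜ, {b}, fun _ => by simpa using Set.finite_singleton b,
      fun h => absurd ((h : y0 = b) ▸ ha) hab, by simpa using hab, rfl, disjoint_compl_left⟩
  by_cases hb : b = y0
  · refine ⟨{a}, {a}ᶜ, fun h => absurd (h : y0 = a).symm ha,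
      fun _ => by simpa using Set.finite_singleton a, rfl, by simpa using (Ne.symm hab),
      disjoint_compl_right⟩
  · refine ⟨{a}, {b}, fun h => absurd (h : y0 = a).symm ha,
      fun h => absurd (h : y0 = b).symm hb, rfl, rfl, by simpa using hab⟩

theorem compactY : @CompactSpace Y (tYd y0) := by
  letI := tYd (Y := Y) y0
  refine ⟨isCompact_iff_ultrafilter_le_nhds.2 fun f _ => ?_⟩
  by_cases hfin : ∃ A : Set Y, A.Finite ∧ A ∈ f
  · obtain ⟨A, hA, hAf⟩ := hfin
    obtain ⟨y, -, hf⟩ := Ultrafilter.eq_pure_of_finite_mem hA hAf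
    exact ⟨y, mem_univ y, le_nhds_iff.2 fun V hyV _ => by rw [hf]; exact hyV⟩
  · refine ⟨y0, mem_univ y0, le_nhds_iff.2 fun V hyV hV => ?_⟩
    by_contra hVf
    exact hfin ⟨Vᶜ, hV hyV, (Ultrafilter.compl_mem_iff_notMem).2 hVf⟩

end AuxY

section CompactX

variable {X Y : Type*} (T : X → Y) (s : Y → X) (y0 : Y) (hs : ∀ y, T (s y) = y)

include hs

theorem compactX : @CompactSpace X (tXd T s y0) := by
  letI := tXd T s y0
  refine ⟨isCompact_iff_ultrafilter_le_nhds.2 fun f _ => ?_⟩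
  by_cases hfin : ∃ A : Set X, A.Finite ∧ A ∈ f
  · obtain ⟨A, hA, hAf⟩ := hfin
    obtain ⟨x, -, hf⟩ := Ultrafilter.eq_pure_of_finite_mem hA hAf
    exact ⟨x, mem_univ x, le_nhds_iff.2 fun U hxU _ => by rw [hf]; exact hxU⟩
  · push_neg at hfin
    have hcof : ∀ A : Set X, Aᶜ.Finite → A ∈ f := by
      intro A hA
      by_contra hAf
      exact hfin Aᶜ hA ((Ultrafilter.compl_mem_iff_notMem).2 hAf)
    by_cases hfib : ∃ y : Y, T ⁻¹' {y} ∈ f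
    · obtain ⟨y, hyf⟩ := hfib
      refine ⟨s y, mem_univ _, le_nhds_iff.2 fun U hsU hU => ?_⟩
      have htr : (T ⁻¹' {y} \ U).Finite := hU.1 y hsU
      have : T ⁻¹' {y} ∩ (T ⁻¹' {y} \ U)ᶜ ⊆ U := by
        intro x hx
        by_contra hxU
        exact hx.2 ⟨hx.1, hxU⟩
      exact mem_of_superset (inter_mem hyf (hcof _ (by simpa using htr))) this
    · push_neg at hfib
      refine ⟨s y0, mem_univ _, le_nhds_iff.2 fun U hsU hU => ?_⟩
      obtain ⟨C, hC, hCU⟩ := hU.2 hsU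
      have hCf : T ⁻¹' C ∈ f := by
        by_contra h
        have h2 : T ⁻¹' Cᶜ ∈ f := by
          rw [preimage_compl]
          exact (Ultrafilter.compl_mem_iff_notMem).2 h
        have h3 : Cᶜ ∈ Ultrafilter.map T f := h2
        obtain ⟨y, -, hy⟩ := Ultrafilter.eq_pure_of_finite_mem hC h3
        refine hfib y ?_
        have : {y} ∈ Ultrafilter.map T f := by rw [hy]; exact mem_pure.2 rfl
        exact this
      exact mem_of_superset hCf hCU

end CompactX

theorem compactify_surjection {X Y : Type*} [Nonempty X] [Nonempty Y]
    (T : X → Y) (hT : Function.Surjective T) :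
    ∃ (tX : TopologicalSpace X) (tY : TopologicalSpace Y),
      @CompactSpace X tX ∧ @T2Space X tX ∧
      @CompactSpace Y tY ∧ @T2Space Y tY ∧
      @Continuous X Y tX tY T := by
  classical
  set s : Y → X := fun y => (hT y).choose with hs_def
  have hs : ∀ y, T (s y) = y := fun y => (hT y).choose_spec
  set y0 : Y := Classical.arbitrary Y
  exact ⟨tXd T s y0, tYd y0, compactX T s y0 hs, t2X T s y0 hs, compactY y0, t2Y y0,
    contT T s y0 hs⟩
end

section
/- Let T : X → Y be a map and suppose π and λ are finite T-related partitions of X and Y respectively. Then there exist compact Hausdorff topologies on X and Y such that every class of π and every class of λ is compact, and T is continuous. -/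
/-!
A map `g : X → Z` into a compact Hausdorff space with closed range is continuous for some compact
Hausdorff topology on `X`: send `x` to `(g x, 1_{x}) ∈ Z × (X → Bool)`, except that one chosen point
of each fibre goes to `(g x, 0)`. This is injective with closed range, so `X` may carry the induced
topology. Apply it to `y ↦ [y]` from `Y` into the finite discrete space `λ`, then to
`x ↦ ([x], T x)` from `X` into `π × Y`, whose range `⋃ C, {C} × T C` is closed because each `T C`
is a class of `λ`. The classes are compact as fibres of continuous maps into discrete spaces.
-/

open Set

variable {X Y : Type*}

/-- The partition `Tπ` of `Y` induced by a map `T : X → Y` and a partition `π` of `X`: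
classes of the equivalence `y₁ ∼ y₂` iff the classes of `π` meeting `T⁻¹y₁` and `T⁻¹y₂`
coincide. -/
def ImagePartition (T : X → Y) (p : Set (Set X)) : Set (Set Y) :=
  {D | ∃ y : Y,
    D = {z | {C ∈ p | (T ⁻¹' {z} ∩ C).Nonempty} = {C ∈ p | (T ⁻¹' {y} ∩ C).Nonempty}}}

/-- The partition `T⁻¹λ` of `X` (nonempty preimages of classes of `λ`). -/
def PreimagePartition (T : X → Y) (q : Set (Set Y)) : Set (Set X) :=
  {S | ∃ B ∈ q, S = T ⁻¹' B ∧ S.Nonempty}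

/-- Common refinement of two partitions. -/
def CommonRefinement (p q : Set (Set X)) : Set (Set X) :=
  {S | ∃ A ∈ p, ∃ B ∈ q, S = A ∩ B ∧ S.Nonempty}

/-- `p` refines `q`. -/
def Refines (p q : Set (Set X)) : Prop := ∀ A ∈ p, ∃ B ∈ q, A ⊆ B

/-- Partitions `p` of `X` and `q` of `Y` are `T`-related: every class of `p` is mapped
by `T` onto some class of `q`. -/
def TRelated (T : X → Y) (p : Set (Set X)) (q : Set (Set Y)) : Prop :=
  ∀ C ∈ p, ∃ D ∈ q, T '' C = D

open Function Topology

theorem exists_compactSpace_t2Space_of_injective_of_isClosed_range {W : Type*}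
    [TopologicalSpace W] [CompactSpace W] [T2Space W] {f : X → W} (hinj : Injective f)
    (hf : IsClosed (range f)) :
    ∃ t : TopologicalSpace X, @CompactSpace X t ∧ @T2Space X t ∧ @Continuous X W t _ f := by
  let _ := TopologicalSpace.induced f ‹_›
  have hemb : IsClosedEmbedding f := ⟨⟨⟨rfl⟩, hinj⟩, hf⟩
  exact ⟨_, hemb.compactSpace, hemb.isEmbedding.t2Space, hemb.continuous⟩

section FiberMark

variable {Z : Type*}

open Classical in
noncomputable def fiberMark (g : X → Z) (x y : X) : Bool :=
  decide (y = x ∧ rangeSplitting g (rangeFactorization g x) ≠ x)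

theorem eq_of_fiberMark_eq_true {g : X → Z} {x a : X} (h : fiberMark g x a = true) : a = x := by
  simp only [fiberMark, decide_eq_true_eq] at h
  exact h.1

theorem fiberMark_rangeSplitting (g : X → Z) (z : range g) :
    fiberMark g (rangeSplitting g z) = fun _ => false := by
  funext y
  simp [fiberMark, leftInverse_rangeSplitting g z]

theorem injective_prod_fiberMark (g : X → Z) : Injective fun x => (g x, fiberMark g x) := by
  intro x y h
  simp only [Prod.mk.injEq] at h
  obtain ⟨hg, hm⟩ := h
  by_cases hx : fiberMark g x x = true
  · rw [hm] at hx
    exact eq_of_fiberMark_eq_true hx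
  by_cases hy : fiberMark g y y = true
  · rw [← hm] at hy
    exact (eq_of_fiberMark_eq_true hy).symm
  simp only [fiberMark, true_and, decide_eq_true_eq, not_not] at hx hy
  have hxy : rangeFactorization g x = rangeFactorization g y := Subtype.ext hg
  rw [← hx, ← hy, hxy]

theorem isClosed_range_prod_fiberMark [TopologicalSpace Z] [T1Space Z] {g : X → Z}
    (hg : IsClosed (range g)) : IsClosed (range fun x => (g x, fiberMark g x)) := by
  rw [← isOpen_compl_iff, isOpen_iff_forall_mem_open]
  rintro ⟨z, w⟩ hzw
  by_cases hw : ∃ a, w a = true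
  · obtain ⟨a, ha⟩ := hw
    set U : Set (Z × (X → Bool)) := {v | v.2 a = true}
    -- only the image of `a` can have a nonzero `a`-th coordinate
    have hS : (range (fun x => (g x, fiberMark g x)) ∩ U).Subsingleton := by
      rintro _ ⟨⟨x, rfl⟩, hx⟩ _ ⟨⟨y, rfl⟩, hy⟩
      rw [← eq_of_fiberMark_eq_true hx, ← eq_of_fiberMark_eq_true hy]
    have hU : IsOpen U := (isOpen_discrete {true}).preimage
      (by fun_prop : Continuous fun v : Z × (X → Bool) => v.2 a)
    exact ⟨U \ (range _ ∩ U), fun v hv hvr => hv.2 ⟨hvr, hv.1⟩, hU.sdiff hS.isClosed,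
      ha, fun h => hzw h.1⟩
  · push Not at hw
    have hw : w = fun _ => false := funext fun a => by simpa using hw a
    subst hw
    have hz : z ∉ range g := fun hz =>
      hzw ⟨rangeSplitting g ⟨z, hz⟩,
        Prod.ext (apply_rangeSplitting g _) (fiberMark_rangeSplitting g _)⟩
    refine ⟨(range g)ᶜ ×ˢ univ, ?_, hg.isOpen_compl.prod isOpen_univ, hz, mem_univ _⟩
    rintro _ ⟨hgx, -⟩ ⟨x, rfl⟩
    exact hgx (mem_range_self x)

theorem exists_compactSpace_t2Space_continuous_of_isClosed_range [TopologicalSpace Z] [CompactSpace Z] [T2Space Z] {g : X → Z} (hg : IsClosed (range g)) :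
    ∃ t : TopologicalSpace X, @CompactSpace X t ∧ @T2Space X t ∧ @Continuous X Z t _ g := by
  obtain ⟨t, hc, ht, hcont⟩ := exists_compactSpace_t2Space_of_injective_of_isClosed_range
    (injective_prod_fiberMark g) (isClosed_range_prod_fiberMark hg)
  exact ⟨t, hc, ht, continuous_fst.comp hcont⟩

end FiberMark

noncomputable def Setoid.IsPartition.indexedPartition {α : Type*} {c : Set (Set α)}
    (hc : Setoid.IsPartition c) : IndexedPartition (Subtype.val : c → Set α) :=
  .mk' _ (fun i j hij => hc.pairwiseDisjoint i.2 j.2 (Subtype.val_injective.ne hij))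
    (fun i => Setoid.nonempty_of_mem_partition hc i.2)
    (fun x => let ⟨b, hb, _⟩ := hc.2 x; ⟨⟨b, hb.1⟩, hb.2⟩)

namespace IndexedPartition

variable {ι α β : Type*} {s : ι → Set α} (hs : IndexedPartition s)

theorem isClosed_range_index_prod [Finite ι] [TopologicalSpace ι] [T1Space ι]
    [TopologicalSpace β] {f : α → β} (hf : ∀ i, IsClosed (f '' s i)) :
    IsClosed (range fun x => (hs.index x, f x)) := by
  have hrange : (range fun x => (hs.index x, f x)) = ⋃ i, {i} ×ˢ (f '' s i) := by
    simp only [singleton_prod, image_image]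
    exact hs.range_piecewise fun i x => (i, f x)
  rw [hrange]
  exact isClosed_iUnion_of_finite fun i => isClosed_singleton.prod (hf i)

theorem isCompact_of_continuous_index [TopologicalSpace α] [CompactSpace α]
    [TopologicalSpace ι] [T1Space ι] (h : Continuous hs.index) (i : ι) : IsCompact (s i) := by
  rw [hs.eq i]
  exact (isClosed_singleton.preimage h).isCompact

end IndexedPartition

theorem compactify_TRelated (T : X → Y)
    (p : Set (Set X)) (q : Set (Set Y))
    (hp : Setoid.IsPartition p) (hpfin : p.Finite)
    (hq : Setoid.IsPartition q) (hqfin : q.Finite)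
    (hrel : TRelated T p q) :
    ∃ (tX : TopologicalSpace X) (tY : TopologicalSpace Y),
      @CompactSpace X tX ∧ @T2Space X tX ∧
      @CompactSpace Y tY ∧ @T2Space Y tY ∧
      (∀ A ∈ p, @IsCompact X tX A) ∧ (∀ B ∈ q, @IsCompact Y tY B) ∧
      @Continuous X Y tX tY T := by
  let _ : TopologicalSpace p := ⊥
  have : DiscreteTopology p := ⟨rfl⟩
  let _ : TopologicalSpace q := ⊥
  have : DiscreteTopology q := ⟨rfl⟩
  have := hpfin.to_subtype
  have := hqfin.to_subtype
  obtain ⟨tY, hYc, hYt, hQ⟩ := exists_compactSpace_t2Space_continuous_of_isClosed_range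
    (isClosed_discrete (range hq.indexedPartition.index))
  have hqcpt (B) (hB : B ∈ q) : IsCompact B :=
    hq.indexedPartition.isCompact_of_continuous_index hQ ⟨B, hB⟩
  have himage (A : p) : IsClosed (T '' A) := by
    obtain ⟨B, hB, hAB⟩ := hrel A A.2
    exact hAB ▸ (hqcpt B hB).isClosed
  obtain ⟨tX, hXc, hXt, hP⟩ := exists_compactSpace_t2Space_continuous_of_isClosed_range
    (hp.indexedPartition.isClosed_range_index_prod himage)
  exact ⟨tX, tY, hXc, hXt, hYc, hYt,
    fun A hA => hp.indexedPartition.isCompact_of_continuous_index (continuous_fst.comp hP) ⟨A, hA⟩,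
    hqcpt, continuous_snd.comp hP⟩
end

section
/- Any finite chain {Xₙ, Tₙ}₁ᴺ of sets and maps can be compactified: one can endow each Xₙ with a compact Hausdorff topology so that each map Tₙ : Xₙ → Xₙ₋₁ (n = 2,…,N) is continuous. -/
/-!
The topologies are built from the bottom of the chain upwards. Given a compact Hausdorff space `B`
and a map `f : A → B` with closed range, choose `D ⊆ A` meeting each nonempty fibre of `f` in
exactly one point and embed `A` into `B × OnePoint A` (`A` discrete) by `x ↦ (f x, ∞)` on `D` and
`x ↦ (f x, x)` off `D`. The image is closed, so the induced topology on `A` is compact Hausdorff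
and `f` is continuous. To go one level higher, the images of the higher levels in `A` must be
closed as well. A set `S ⊆ A` is closed as soon as `f '' S` is closed and `S` contains the point
of `D` over each point of `f '' S`; for the nested images of all higher levels at once this is
arranged by choosing every point of `D` as deep in the chain as possible.
-/

open Set Topology OnePoint

namespace ChainCompactification

section Collapse

variable {A : Type*}

def toOnePoint (x : A) : OnePoint (WithDiscreteTopology A) :=
  (WithTopology.toTopology ⊥ x : WithDiscreteTopology A)

lemma toOnePoint_injective : Function.Injective (toOnePoint (A := A)) :=
  OnePoint.coe_injective.comp (WithTopology.toTopology_injective ⊥)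

lemma isOpen_singleton_toOnePoint (x : A) : IsOpen {toOnePoint x} := by
  rw [toOnePoint, ← image_singleton]
  exact OnePoint.isOpen_image_coe.2 (isOpen_discrete _)

open Classical in
noncomputable def collapse (D : Set A) (x : A) : OnePoint (WithDiscreteTopology A) :=
  if x ∈ D then ∞ else toOnePoint x

lemma collapse_of_mem {D : Set A} {x : A} (hx : x ∈ D) : collapse D x = ∞ := if_pos hx

lemma collapse_of_notMem {D : Set A} {x : A} (hx : x ∉ D) : collapse D x = toOnePoint x :=
  if_neg hx

lemma collapse_eq_toOnePoint_iff {D : Set A} {x y : A} :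
    collapse D x = toOnePoint y ↔ x ∉ D ∧ x = y := by
  unfold collapse
  split_ifs with hx
  · simp [hx, toOnePoint]
  · simp [hx, toOnePoint_injective.eq_iff]

end Collapse

section FiberEmbedding

variable {A B : Type*} (f : A → B) (D : Set A)

noncomputable def fiberEmbedding (x : A) : B × OnePoint (WithDiscreteTopology A) :=
  (f x, collapse D x)

lemma fiberEmbedding_injective (hD : InjOn f D) : Function.Injective (fiberEmbedding f D) := by
  intro x y hxy
  obtain ⟨hf, hc⟩ := Prod.ext_iff.1 hxy
  by_cases hy : y ∈ D
  · by_cases hx : x ∈ D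
    · exact hD hx hy hf
    · exact ((collapse_eq_toOnePoint_iff.1 (hc.symm.trans (collapse_of_notMem hx))).2).symm
  · exact (collapse_eq_toOnePoint_iff.1 (hc.trans (collapse_of_notMem hy))).2

lemma isOpen_setOf_snd_eq_toOnePoint [TopologicalSpace B] (x : A) :
    IsOpen {p : B × OnePoint (WithDiscreteTopology A) | p.2 = toOnePoint x} :=
  (isOpen_singleton_toOnePoint x).preimage continuous_snd

lemma range_fiberEmbedding (hD : SurjOn f D (range f)) :
    range (fiberEmbedding f D) =
      {p | p.1 ∈ range f ∧ ∀ x, p.2 = toOnePoint x → p.1 = f x ∧ x ∉ D} := by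
  ext ⟨b, z⟩
  constructor
  · rintro ⟨x, hx⟩
    obtain ⟨rfl, rfl⟩ := Prod.ext_iff.1 hx
    refine ⟨mem_range_self x, fun y hy => ?_⟩
    obtain ⟨hxD, rfl⟩ := collapse_eq_toOnePoint_iff.1 hy
    exact ⟨rfl, hxD⟩
  · rintro ⟨⟨a, rfl⟩, h⟩
    induction z using OnePoint.rec with
    | infty =>
      obtain ⟨d, hd, hda⟩ := hD (mem_range_self a)
      exact ⟨d, Prod.ext hda (collapse_of_mem hd)⟩
    | coe w =>
      obtain ⟨x⟩ := w
      obtain ⟨hax, hx⟩ := h x rfl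
      exact ⟨x, Prod.ext hax.symm (collapse_of_notMem hx)⟩

lemma isClosed_range_fiberEmbedding [TopologicalSpace B] [T1Space B] (hf : IsClosed (range f))
    (hD : SurjOn f D (range f)) :
    IsClosed (range (fiberEmbedding f D)) := by
  rw [range_fiberEmbedding f D hD, ofPred_and, ofPred_forall]
  refine (hf.preimage continuous_fst).inter (isClosed_iInter fun x => ?_)
  exact isClosed_imp (isOpen_setOf_snd_eq_toOnePoint x)
    ((isClosed_singleton.preimage continuous_fst).inter isClosed_const)

lemma preimage_fiberEmbedding {S : Set A} (hS : ∀ d ∈ D, f d ∈ f '' S → d ∈ S) :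
    fiberEmbedding f D ⁻¹' {p | p.1 ∈ f '' S ∧ ∀ x, p.2 = toOnePoint x → x ∈ S} = S := by
  ext x
  refine ⟨fun ⟨hfx, h⟩ => ?_, fun hx => ⟨mem_image_of_mem f hx, fun y hy => ?_⟩⟩
  · by_cases hxD : x ∈ D
    · exact hS x hxD hfx
    · exact h x (collapse_of_notMem hxD)
  · obtain ⟨-, rfl⟩ := collapse_eq_toOnePoint_iff.1 hy
    exact hx

lemma isClosed_setOf_fst_mem_image [TopologicalSpace B] {S : Set A} (hS : IsClosed (f '' S)) :
    IsClosed {p : B × OnePoint (WithDiscreteTopology A) |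
      p.1 ∈ f '' S ∧ ∀ x, p.2 = toOnePoint x → x ∈ S} := by
  rw [ofPred_and, ofPred_forall]
  exact (hS.preimage continuous_fst).inter
    (isClosed_iInter fun x => isClosed_imp (isOpen_setOf_snd_eq_toOnePoint x) isClosed_const)

theorem exists_topology_of_bijOn [TopologicalSpace B] [CompactSpace B] [T2Space B]
    (hf : IsClosed (range f)) (hD : BijOn f D (range f)) :
    ∃ _ : TopologicalSpace A, CompactSpace A ∧ T2Space A ∧ Continuous f ∧
      ∀ S : Set A, IsClosed (f '' S) → (∀ d ∈ D, f d ∈ f '' S → d ∈ S) → IsClosed S := by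
  let _ : TopologicalSpace A := .induced (fiberEmbedding f D) inferInstance
  have he : IsClosedEmbedding (fiberEmbedding f D) :=
    ⟨⟨⟨rfl⟩, fiberEmbedding_injective f D hD.injOn⟩,
      isClosed_range_fiberEmbedding f D hf hD.surjOn⟩
  refine ⟨‹_›, he.compactSpace, he.isEmbedding.t2Space, ?_, fun S hS hSD => ?_⟩
  · exact continuous_fst.comp he.continuous
  rw [← preimage_fiberEmbedding f D hSD]
  exact (isClosed_setOf_fst_mem_image f hS).preimage he.continuous

end FiberEmbedding

section Antitone

variable {A B : Type*} (f : A → B) {S : ℕ → Set A} (hS : Antitone S) (m : ℕ)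
include hS

lemma exists_preimage_mem_of_antitone {b : B} (hb : b ∈ range f) :
    ∃ a, f a = b ∧ ∀ k ≤ m, b ∈ f '' S k → a ∈ S k := by
  classical
  by_cases h : ∃ k ≤ m, b ∈ f '' S k
  · obtain ⟨k, hkm, hk⟩ := h
    obtain ⟨a, ha, rfl⟩ := Nat.findGreatest_spec (P := fun k => b ∈ f '' S k) hkm hk
    exact ⟨a, rfl, fun j hjm hj => hS (Nat.le_findGreatest hjm hj) ha⟩
  · obtain ⟨a, rfl⟩ := hb
    exact ⟨a, rfl, fun k hkm hk => absurd ⟨k, hkm, hk⟩ h⟩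

lemma exists_bijOn_range_of_antitone :
    ∃ D : Set A, BijOn f D (range f) ∧ ∀ d ∈ D, ∀ k ≤ m, f d ∈ f '' S k → d ∈ S k := by
  choose g hgf hgS using fun b : range f => exists_preimage_mem_of_antitone f hS m b.2
  refine ⟨range g, ⟨?_, ?_, ?_⟩, ?_⟩
  · rintro _ ⟨b, rfl⟩
    exact hgf b ▸ b.2
  · rintro _ ⟨b, rfl⟩ _ ⟨b', rfl⟩ h
    exact congrArg g (Subtype.ext ((hgf b).symm.trans (h.trans (hgf b'))))
  · rintro b hb
    exact ⟨g ⟨b, hb⟩, mem_range_self _, hgf _⟩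
  · rintro _ ⟨b, rfl⟩ k hkm hk
    exact hgS b k hkm (hgf b ▸ hk)

theorem exists_topology_of_antitone [TopologicalSpace B] [CompactSpace B] [T2Space B]
    (hf : IsClosed (range f)) (hSf : ∀ k ≤ m, IsClosed (f '' S k)) :
    ∃ _ : TopologicalSpace A, CompactSpace A ∧ T2Space A ∧ Continuous f ∧
      ∀ k ≤ m, IsClosed (S k) := by
  obtain ⟨D, hD, hDS⟩ := exists_bijOn_range_of_antitone f hS m
  obtain ⟨_, hc, h2, hcont, hclosed⟩ := exists_topology_of_bijOn f D hf hD
  exact ⟨_, hc, h2, hcont, fun k hk => hclosed (S k) (hSf k hk) fun d hd => hDS d hd k hk⟩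

end Antitone

section Chain

variable {X : ℕ → Type*} (T : ∀ n, X (n + 1) → X n)

/-- `iterRange T k n` is the image of `X (n + k)` in `X n`. -/
def iterRange : ℕ → ∀ n, Set (X n)
  | 0, _ => univ
  | k + 1, n => T n '' iterRange k (n + 1)

lemma antitone_iterRange (n : ℕ) : Antitone fun k => iterRange T k n := by
  refine antitone_nat_of_succ_le fun k => ?_
  induction k generalizing n with
  | zero => exact subset_univ _
  | succ k ih => exact image_mono (ih (n + 1))

lemma exists_topologies_isClosed_iterRange {N n : ℕ} (hn : n ≤ N) :
    ∃ _ : ∀ i, TopologicalSpace (X i),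
    (∀ i ≤ n, CompactSpace (X i) ∧ T2Space (X i) ∧
      ∀ k, i + k ≤ N → IsClosed (iterRange T k i)) ∧
    ∀ i < n, Continuous (T i) := by
  induction n with
  | zero =>
    obtain ⟨t₀, hc, h2, -, hcl⟩ := exists_topology_of_antitone (fun _ : X 0 => ())
      (antitone_iterRange T 0) N (isClosed_discrete _) fun k _ => isClosed_discrete _
    refine ⟨Function.update (fun _ => ⊥) 0 t₀, fun i hi => ?_,
      fun i hi => absurd hi i.not_lt_zero⟩
    obtain rfl := Nat.le_zero.1 hi
    rw [Function.update_self]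
    exact ⟨hc, h2, fun k hk => hcl k (by omega)⟩
  | succ n ih =>
    obtain ⟨t, ht, hcont⟩ := ih (by omega)
    obtain ⟨_, _, hcl⟩ := ht n le_rfl
    obtain ⟨t', hc', h2', hcont', hcl'⟩ := exists_topology_of_antitone (T n)
      (antitone_iterRange T (n + 1)) (N - (n + 1))
      (by rw [← image_univ]; exact hcl 1 (by omega)) fun k hk => hcl (k + 1) (by omega)
    refine ⟨Function.update t (n + 1) t', fun i hi => ?_, fun i hi => ?_⟩
    · rcases Nat.le_succ_iff.1 hi with hi | rfl
      · rw [Function.update_of_ne (by omega)]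
        exact ht i hi
      · rw [Function.update_self]
        exact ⟨hc', h2', fun k hk => hcl' k (by omega)⟩
    · rcases Nat.lt_succ_iff_lt_or_eq.1 hi with hi | rfl
      · rw [Function.update_of_ne (by omega), Function.update_of_ne (by omega)]
        exact hcont i hi
      · rw [Function.update_self, Function.update_of_ne (by omega)]
        exact hcont'

end Chain

end ChainCompactification

/-- Any finite chain of sets and maps can be compactified: here `X n` for `n ≤ N` play
the role of `X₁, …, X_N` and `T n : X (n+1) → X n` the connecting maps. -/
theorem chain_compactification (N : ℕ) (X : ℕ → Type*) (T : ∀ n : ℕ, X (n + 1) → X n) :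
    ∃ t : ∀ n : ℕ, TopologicalSpace (X n),
      (∀ n ≤ N, @CompactSpace (X n) (t n) ∧ @T2Space (X n) (t n)) ∧
      (∀ n < N, @Continuous (X (n + 1)) (X n) (t (n + 1)) (t n) (T n)) := by
  obtain ⟨t, ht, hcont⟩ :=
    ChainCompactification.exists_topologies_isClosed_iterRange T (le_refl N)
  exact ⟨t, fun n hn => ⟨(ht n hn).1, (ht n hn).2.1⟩, hcont⟩
end

section
/- If T : X → X satisfies ⋂ₙ TⁿX = {x*}, a ∈ X has infinite orbit, bₙ = Tⁿa, and Bₙᵏ = {x ∈ X : Tᵏx = bₙ and Tᵏ⁻¹x ∉ O(a)} for k ≥ 1, then for each fixed n the family {Bₙᵏ : k ≥ 1} is pairwise disjoint and only finitely many Bₙᵏ are nonempty. -/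
theorem branches_disjoint_and_finite
    {X : Type*} (T : X → X) (xs : X)
    (h : (⋂ n : ℕ, T^[n] '' Set.univ) = {xs})
    (a : X) (ha : (Set.range fun m : ℕ => T^[m] a).Infinite) (n : ℕ) :
    (∀ k₁ k₂ : ℕ, 1 ≤ k₁ → 1 ≤ k₂ → k₁ ≠ k₂ →
      Disjoint
        {x : X | T^[k₁] x = T^[n] a ∧ T^[k₁ - 1] x ∉ Set.range fun m : ℕ => T^[m] a}
        {x : X | T^[k₂] x = T^[n] a ∧ T^[k₂ - 1] x ∉ Set.range fun m : ℕ => T^[m] a}) ∧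
    {k : ℕ | 1 ≤ k ∧
      ({x : X | T^[k] x = T^[n] a ∧ T^[k - 1] x ∉ Set.range fun m : ℕ => T^[m] a}).Nonempty}.Finite := by
  constructor
  · intro k₁ k₂ h₁ h₂ hne
    wlog hlt : k₁ < k₂ generalizing k₁ k₂
    · exact (this k₂ k₁ h₂ h₁ hne.symm (by omega)).symm
    rw [Set.disjoint_left]
    rintro x ⟨hx1, _⟩ ⟨_, hy2⟩
    apply hy2
    refine ⟨k₂ - 1 - k₁ + n, ?_⟩
    show T^[k₂ - 1 - k₁ + n] a = T^[k₂ - 1] x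
    rw [Function.iterate_add_apply, ← hx1, ← Function.iterate_add_apply]
    congr 1; omega
  · by_contra hinf'
    have hinf : Set.Infinite {k : ℕ | 1 ≤ k ∧
      ({x : X | T^[k] x = T^[n] a ∧ T^[k - 1] x ∉ Set.range fun m : ℕ => T^[m] a}).Nonempty} := hinf'
    have hbn : T^[n] a ∈ ⋂ k : ℕ, T^[k] '' Set.univ := by
      rw [Set.mem_iInter]
      intro k
      obtain ⟨k', ⟨hk'1, x, hx1, _⟩, hkk'⟩ := hinf.exists_gt k
      refine ⟨T^[k' - k] x, trivial, ?_⟩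
      rw [← Function.iterate_add_apply]
      rw [show k + (k' - k) = k' by omega, hx1]
    rw [h] at hbn
    have hxs : T xs = xs := by
      have hmem : T xs ∈ ⋂ k : ℕ, T^[k] '' Set.univ := by
        rw [Set.mem_iInter]
        intro k
        cases k with
        | zero => exact ⟨T xs, trivial, rfl⟩
        | succ m =>
          have : xs ∈ ⋂ k : ℕ, T^[k] '' Set.univ := by rw [h]; rfl
          rw [Set.mem_iInter] at this
          obtain ⟨y, _, hy⟩ := this m
          exact ⟨y, trivial, by rw [Function.iterate_succ_apply', hy]⟩
      rw [h] at hmem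
      exact hmem
    have hiter : ∀ j, T^[j] xs = xs := by
      intro j
      induction j with
      | zero => rfl
      | succ m ih => rw [Function.iterate_succ_apply', ih, hxs]
    have hsub : (Set.range fun m : ℕ => T^[m] a) ⊆ (fun m : ℕ => T^[m] a) '' Set.Iic n := by
      rintro _ ⟨m, rfl⟩
      by_cases hm : m ≤ n
      · exact ⟨m, hm, rfl⟩
      · refine ⟨n, le_refl n, ?_⟩
        show T^[n] a = T^[m] a
        rw [show m = (m - n) + n by omega, Function.iterate_add_apply, hbn,
          hiter, ← hbn]
    exact ha ((Set.finite_Iic n).image _ |>.subset hsub)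
end

section
/- If T : X → X is a selfmap of a set X such that ⋂ₙ TⁿX = {x*} for some x* ∈ X, then X can be endowed with a compact Hausdorff topology making T continuous. -/
open Set Function
open scoped Classical

namespace MCompactAux

variable {X : Type*}

section
variable {T : X → X} {xs : X}

lemma range_antitone (T : X → X) {m n : ℕ} (hmn : m ≤ n) :
    Set.range (T^[n]) ⊆ Set.range (T^[m]) := by
  rintro x ⟨w, rfl⟩
  exact ⟨T^[n - m] w, by rw [← Function.iterate_add_apply, Nat.add_sub_cancel' hmn]⟩

lemma mem_all_iff (h : (⋂ n : ℕ, T^[n] '' Set.univ) = {xs}) {v : X} :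
    (∀ n, v ∈ Set.range T^[n]) ↔ v = xs := by
  have : (⋂ n : ℕ, Set.range (T^[n])) = {xs} := by
    simpa [Set.image_univ] using h
  constructor
  · intro hv
    have hv' : v ∈ ⋂ n : ℕ, Set.range (T^[n]) := Set.mem_iInter.2 hv
    rw [this] at hv'; simpa using hv'
  · intro hv n
    have hx : v ∈ ⋂ n : ℕ, Set.range (T^[n]) := by rw [this, hv]; rfl
    exact Set.mem_iInter.1 hx n

lemma fix_xs (h : (⋂ n : ℕ, T^[n] '' Set.univ) = {xs}) : T xs = xs := by
  apply (mem_all_iff h).1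
  intro n
  obtain ⟨w, hw⟩ := (mem_all_iff h).2 rfl n
  exact ⟨T w, by rw [← Function.iterate_succ_apply, Function.iterate_succ_apply', hw]⟩

lemma iter_fix_xs (h : (⋂ n : ℕ, T^[n] '' Set.univ) = {xs}) (k : ℕ) : T^[k] xs = xs := by
  induction k with
  | zero => rfl
  | succ k ih => rw [Function.iterate_succ_apply', ih, fix_xs h]

lemma periodic_eq_xs (h : (⋂ n : ℕ, T^[n] '' Set.univ) = {xs}) {v : X} {p : ℕ}
    (hp : T^[p] v = v) (hp0 : 0 < p) : v = xs := by
  apply (mem_all_iff h).1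
  intro n
  have key : ∀ m : ℕ, T^[m * p] v = v := by
    intro m
    induction m with
    | zero => simp
    | succ m ih => rw [Nat.succ_mul, Function.iterate_add_apply, hp, ih]
  have hv : v ∈ Set.range (T^[n * p]) := ⟨v, key n⟩
  exact range_antitone T (Nat.le_mul_of_pos_right n hp0) hv

lemma orbit_collapse (h : (⋂ n : ℕ, T^[n] '' Set.univ) = {xs}) {v : X} {a b : ℕ}
    (hab : a < b) (he : T^[a] v = T^[b] v) : T^[a] v = xs := by
  apply periodic_eq_xs h (p := b - a)
  · rw [← Function.iterate_add_apply, Nat.sub_add_cancel hab.le, ← he]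
  · omega

lemma exists_not_mem (h : (⋂ n : ℕ, T^[n] '' Set.univ) = {xs}) {v : X} (hv : v ≠ xs) :
    ∃ n, v ∉ Set.range T^[n] := by
  by_contra hc
  push_neg at hc
  exact hv ((mem_all_iff h).1 hc)

end

section
variable (T : X → X) (xs : X)

lemma find_pred_mem (h : (⋂ n : ℕ, T^[n] '' Set.univ) = {xs}) {c : X} (hc1 : c ≠ xs)
    (hc2 : c ∈ Set.range (T^[1])) :
    c ∈ Set.range (T^[Nat.find (exists_not_mem h hc1) - 1]) ∧
      2 ≤ Nat.find (exists_not_mem h hc1) := by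
  have h2 : 1 < Nat.find (exists_not_mem h hc1) := by
    rw [Nat.lt_find_iff]
    intro n hn
    simp only [not_not]
    exact range_antitone T hn hc2
  refine ⟨?_, h2⟩
  have hmin := Nat.find_min (exists_not_mem h hc1)
      (m := Nat.find (exists_not_mem h hc1) - 1) (by omega)
  simpa using hmin

noncomputable def zh (h : (⋂ n : ℕ, T^[n] '' Set.univ) = {xs}) (c : X) : X :=
  if hc : c ≠ xs ∧ c ∈ Set.range (T^[1]) then
    T^[Nat.find (exists_not_mem h hc.1) - 2] (find_pred_mem T xs h hc.1 hc.2).1.choose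
  else c

variable (h : (⋂ n : ℕ, T^[n] '' Set.univ) = {xs})

lemma zh_xs : zh T xs h xs = xs := by
  simp only [zh]
  rw [dif_neg]
  simp

lemma zh_spec {c : X} (hc1 : c ≠ xs) {j : ℕ} (hc2 : c ∈ Set.range (T^[j + 1])) :
    T (zh T xs h c) = c ∧ zh T xs h c ∈ Set.range (T^[j]) := by
  have hc2' : c ∈ Set.range (T^[1]) := range_antitone T (by omega) hc2
  have hd : c ≠ xs ∧ c ∈ Set.range (T^[1]) := ⟨hc1, hc2'⟩
  have hlow : j + 1 < Nat.find (exists_not_mem h hc1) := by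
    by_contra hge
    push_neg at hge
    exact (Nat.find_spec (exists_not_mem h hc1)) (range_antitone T hge hc2)
  have h2 := (find_pred_mem T xs h hc1 hc2').2
  have hw := (find_pred_mem T xs h hc1 hc2').1.choose_spec
  simp only [zh]
  rw [dif_pos hd]
  constructor
  · have e : Nat.find (exists_not_mem h hc1) - 2 + 1 = Nat.find (exists_not_mem h hc1) - 1 := by
      omega
    rw [← Function.iterate_succ_apply' T (Nat.find (exists_not_mem h hc1) - 2), Nat.succ_eq_add_one, e]
    exact hw
  · exact ⟨T^[Nat.find (exists_not_mem h hc1) - 2 - j] _, by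
      rw [← Function.iterate_add_apply]
      congr 1
      omega⟩

lemma zh_ne_xs {c : X} (hc1 : c ≠ xs) (hc2 : c ∈ Set.range (T^[1])) :
    zh T xs h c ≠ xs := by
  intro he
  obtain ⟨hT, -⟩ := zh_spec T xs h hc1 (j := 0) hc2
  rw [he, fix_xs h] at hT
  exact hc1 hT.symm

def Sp (u : X) (n : ℕ) : Prop := ∀ k < n, T^[k] u = zh T xs h (T^[k + 1] u)

def Minf (u : X) : Prop := ∀ k, T^[k] u = zh T xs h (T^[k + 1] u)

lemma sp_of_minf {u : X} (hu : Minf T xs h u) (n : ℕ) : Sp T xs h u n :=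
  fun k _ => hu k

lemma sp_mono {u : X} {m n : ℕ} (hu : Sp T xs h u n) (hmn : m ≤ n) : Sp T xs h u m :=
  fun k hk => hu k (lt_of_lt_of_le hk hmn)

lemma minf_xs : Minf T xs h xs := by
  intro k
  rw [iter_fix_xs h, iter_fix_xs h, zh_xs]

lemma zh_iter_xs (m : ℕ) : (zh T xs h)^[m] xs = xs := by
  induction m with
  | zero => rfl
  | succ m ihm => rw [Function.iterate_succ_apply', ihm, zh_xs T xs h]

lemma sp_eq_zh_iter {u : X} {n : ℕ} (hu : Sp T xs h u n) :
    u = (zh T xs h)^[n] (T^[n] u) := by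
  induction n generalizing u with
  | zero => rfl
  | succ n ih =>
    have h0 : u = zh T xs h (T u) := by
      have := hu 0 (by omega)
      simpa using this
    have hTu : Sp T xs h (T u) n := by
      intro k hk
      have h1 := hu (k + 1) (by omega)
      rw [Function.iterate_succ_apply T (k + 1) u, Function.iterate_succ_apply T k u] at h1
      exact h1
    calc u = zh T xs h (T u) := h0
      _ = zh T xs h ((zh T xs h)^[n] (T^[n] (T u))) := by rw [← ih hTu]
      _ = (zh T xs h)^[n + 1] (T^[n + 1] u) := by
          rw [Function.iterate_succ_apply' (zh T xs h) n, Function.iterate_succ_apply T n u]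

lemma sp_unique {u u' : X} {n : ℕ} (hu : Sp T xs h u n) (hu' : Sp T xs h u' n)
    (he : T^[n] u = T^[n] u') : u = u' := by
  rw [sp_eq_zh_iter T xs h hu, sp_eq_zh_iter T xs h hu', he]

lemma sp_ne_xs {u : X} {n : ℕ} (hu : Sp T xs h u n) (he : T^[n] u = xs) : u = xs := by
  induction n generalizing u with
  | zero => exact he
  | succ n ih =>
    apply ih (sp_mono T xs h hu (by omega))
    have := hu n (by omega)
    rw [this, he, zh_xs]

lemma sp_shift {u : X} {n : ℕ} (hu : Sp T xs h u n) (d : ℕ) :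
    Sp T xs h (T^[d] u) (n - d) := by
  intro k hk
  rw [← Function.iterate_add_apply, ← Function.iterate_add_apply]
  have : k + 1 + d = k + d + 1 := by omega
  rw [this]
  exact hu (k + d) (by omega)

lemma minf_shift {u : X} (hu : Minf T xs h u) (d : ℕ) : Minf T xs h (T^[d] u) := by
  intro k
  rw [← Function.iterate_add_apply, ← Function.iterate_add_apply]
  have : k + 1 + d = k + d + 1 := by omega
  rw [this]
  exact hu (k + d)

lemma minf_down {w v : X} (hw : Minf T xs h w) (hv : T v = w) (hz : v = zh T xs h w) :
    Minf T xs h v := by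
  intro k
  cases k with
  | zero =>
    simpa [hv] using hz
  | succ k =>
    rw [Function.iterate_succ_apply, Function.iterate_succ_apply, hv]
    exact hw k

lemma minf_iter_ne_xs {u : X} (hu : Minf T xs h u) (hune : u ≠ xs) (k : ℕ) :
    T^[k] u ≠ xs := by
  intro he
  exact hune (sp_ne_xs T xs h (sp_of_minf T xs h hu k) he)

lemma descent {c : X} (ℓ : ℕ) (hc : c ∈ Set.range (T^[ℓ])) :
    T^[ℓ] ((zh T xs h)^[ℓ] c) = c ∧ Sp T xs h ((zh T xs h)^[ℓ] c) ℓ := by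
  induction ℓ generalizing c with
  | zero => exact ⟨rfl, fun k hk => by omega⟩
  | succ ℓ ih =>
    by_cases hcx : c = xs
    · rw [hcx]
      have hz : (zh T xs h)^[ℓ + 1] xs = xs := zh_iter_xs T xs h _
      rw [hz]
      exact ⟨iter_fix_xs h _, sp_of_minf T xs h (minf_xs T xs h) _⟩
    · obtain ⟨hT, hmem⟩ := zh_spec T xs h hcx (j := ℓ) hc
      obtain ⟨ih1, ih2⟩ := ih hmem
      have e1 : (zh T xs h)^[ℓ + 1] c = (zh T xs h)^[ℓ] (zh T xs h c) :=
        Function.iterate_succ_apply _ _ _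
      have part1 : T^[ℓ + 1] ((zh T xs h)^[ℓ] (zh T xs h c)) = c := by
        rw [Function.iterate_succ_apply' T ℓ, ih1, hT]
      constructor
      · rw [e1]; exact part1
      · intro k hk
        rw [e1]
        rcases Nat.lt_or_ge k ℓ with hkl | hkl
        · exact ih2 k hkl
        · have hkeq : k = ℓ := by omega
          subst hkeq
          rw [ih1, part1]

lemma descent_minf {c : X} (ℓ : ℕ) (hc : c ∈ Set.range (T^[ℓ])) (hcm : Minf T xs h c) :
    Minf T xs h ((zh T xs h)^[ℓ] c) := by
  induction ℓ generalizing c with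
  | zero => exact hcm
  | succ ℓ ih =>
    by_cases hcx : c = xs
    · rw [hcx, zh_iter_xs T xs h]
      exact minf_xs T xs h
    · obtain ⟨hT, hmem⟩ := zh_spec T xs h hcx (j := ℓ) hc
      have hzminf : Minf T xs h (zh T xs h c) := minf_down T xs h hcm hT rfl
      rw [Function.iterate_succ_apply]
      exact ih hmem hzminf


lemma iter_eq_of_eq {T : X → X} {v u : X} {n : ℕ} (he : T^[n] v = T^[n] u) {k : ℕ}
    (hk : n ≤ k) : T^[k] v = T^[k] u := by
  have e : k = (k - n) + n := by omega
  rw [e, Function.iterate_add_apply, Function.iterate_add_apply, he]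

def Win (u : X) (n : ℕ) (E : Finset X) : Set X :=
  {v | T^[n] v = T^[n] u ∧ ∀ k < n, T^[k] v ∉ (E : Set X)}

def Vb (u : X) (E : Finset X) : Set X :=
  {v | ∃ n, T^[n] v = T^[n] u ∧ ∀ k < n, T^[k] v ∉ (E : Set X)}

def Nb (E : Finset X) : Set X := {v | ∀ k, T^[k] v ∉ (E : Set X)}

def Ob (u : X) (E : Finset X) : Set X :=
  {v | ∃ n, Sp T xs h u n ∧ T^[n] v = T^[n] u ∧ ∀ k < n, T^[k] v ∉ (E : Set X)}

def IsOp (U : Set X) : Prop := ∀ u ∈ U,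
  (u = xs → ∃ E : Finset X, xs ∉ E ∧ ∃ P : Finset (ℕ × X),
     (∀ p ∈ P, p.2 ≠ xs ∧ Minf T xs h p.2) ∧
     (Nb T E \ ⋃ p ∈ P, T^[p.1] ⁻¹' (Vb T p.2 ∅)) ⊆ U) ∧
  (u ≠ xs → Minf T xs h u →
     ∃ E : Finset X, (∀ k, T^[k] u ∉ (E : Set X)) ∧ Vb T u E ⊆ U) ∧
  (u ≠ xs → ¬ Minf T xs h u → ∀ n, Sp T xs h u n →
     ∃ E : Finset X, (∀ k < n, T^[k] u ∉ (E : Set X)) ∧ Win T u n E ⊆ U)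

lemma win_anti {u : X} {n : ℕ} {E E' : Finset X} (hEE : E ⊆ E') :
    Win T u n E' ⊆ Win T u n E := by
  rintro v ⟨hv1, hv2⟩
  exact ⟨hv1, fun k hk hmem => hv2 k hk (Finset.mem_coe.2 (hEE (Finset.mem_coe.1 hmem)))⟩

lemma vb_anti {u : X} {E E' : Finset X} (hEE : E ⊆ E') :
    Vb T u E' ⊆ Vb T u E := by
  rintro v ⟨n, hv1, hv2⟩
  exact ⟨n, hv1, fun k hk hmem => hv2 k hk (Finset.mem_coe.2 (hEE (Finset.mem_coe.1 hmem)))⟩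

lemma nb_anti {E E' : Finset X} (hEE : E ⊆ E') : Nb T E' ⊆ Nb T E := by
  intro v hv k hmem
  exact hv k (Finset.mem_coe.2 (hEE (Finset.mem_coe.1 hmem)))

lemma self_mem_vb (u : X) (E : Finset X) : u ∈ Vb T u E :=
  ⟨0, rfl, fun k hk => by omega⟩

lemma self_mem_ob (u : X) (E : Finset X) : u ∈ Ob T xs h u E :=
  ⟨0, fun k hk => by omega, rfl, fun k hk => by omega⟩

lemma win_subset_vb (u : X) (n : ℕ) (E : Finset X) : Win T u n E ⊆ Vb T u E :=
  fun v hv => ⟨n, hv.1, hv.2⟩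

lemma xs_notMem_vb {u : X} (hu : u ≠ xs) (hm : Minf T xs h u) (E : Finset X) :
    xs ∉ Vb T u E := by
  rintro ⟨n, hn, -⟩
  rw [iter_fix_xs h] at hn
  exact minf_iter_ne_xs T xs h hm hu n hn.symm

lemma xs_notMem_ob {u : X} (hu : u ≠ xs) (E : Finset X) : xs ∉ Ob T xs h u E := by
  rintro ⟨n, hsp, hn, -⟩
  rw [iter_fix_xs h] at hn
  exact hu (sp_ne_xs T xs h hsp hn.symm)

lemma nb_open {E : Finset X} (hE : xs ∉ E) : IsOp T xs h (Nb T E) := by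
  intro v hv
  refine ⟨?_, ?_, ?_⟩
  · intro _
    refine ⟨E, hE, ∅, by simp, ?_⟩
    intro w hw
    exact hw.1
  · intro _ _
    refine ⟨E, hv, ?_⟩
    rintro w ⟨n, hw1, hw2⟩ k
    rcases Nat.lt_or_ge k n with hk | hk
    · exact hw2 k hk
    · rw [iter_eq_of_eq hw1 hk]
      exact hv k
  · intro _ _ n _
    refine ⟨E, fun k _ => hv k, ?_⟩
    rintro w ⟨hw1, hw2⟩ k
    rcases Nat.lt_or_ge k n with hk | hk
    · exact hw2 k hk
    · rw [iter_eq_of_eq hw1 hk]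
      exact hv k

lemma vb_open {u : X} {E : Finset X} (hu : u ≠ xs) (hm : Minf T xs h u)
    (hE : ∀ k, T^[k] u ∉ (E : Set X)) : IsOp T xs h (Vb T u E) := by
  rintro v ⟨n, hvn, hva⟩
  refine ⟨?_, ?_, ?_⟩
  · intro hvxs
    exfalso
    rw [hvxs, iter_fix_xs h] at hvn
    exact minf_iter_ne_xs T xs h hm hu n hvn.symm
  · intro hvne hminfv
    have hvu : v = u := sp_unique T xs h (sp_of_minf T xs h hminfv n)
      (sp_of_minf T xs h hm n) hvn
    subst hvu
    exact ⟨E, hE, subset_rfl⟩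
  · intro hvne hnm m hspm
    have hmn : m < n := by
      by_contra hge
      push_neg at hge
      have hvm : T^[m] v = T^[m] u := iter_eq_of_eq hvn hge
      exact hnm ((sp_unique T xs h hspm (sp_of_minf T xs h hm m) hvm) ▸ hm)
    refine ⟨E, fun k hk => hva k (hk.trans hmn), ?_⟩
    rintro w ⟨hw1, hw2⟩
    refine ⟨n, by rw [iter_eq_of_eq hw1 hmn.le, hvn], ?_⟩
    intro k hk
    rcases Nat.lt_or_ge k m with hkm | hkm
    · exact hw2 k hkm
    · rw [iter_eq_of_eq hw1 hkm]
      exact hva k hk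

lemma ob_open {u : X} {E : Finset X} (hu : u ≠ xs) (hnm : ¬ Minf T xs h u)
    (hE : ∀ k, Sp T xs h u (k + 1) → T^[k] u ∉ (E : Set X)) :
    IsOp T xs h (Ob T xs h u E) := by
  rintro v ⟨n, hspn, hvn, hva⟩
  refine ⟨?_, ?_, ?_⟩
  · intro hvxs
    exfalso
    rw [hvxs, iter_fix_xs h] at hvn
    exact hu (sp_ne_xs T xs h hspn hvn.symm)
  · intro hvne hminfv
    exfalso
    exact hnm ((sp_unique T xs h hspn (sp_of_minf T xs h hminfv n) hvn.symm) ▸ hminfv)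
  · intro hvne hnmv m hspm
    by_cases hvu : v = u
    · subst hvu
      refine ⟨E, fun k hk => hE k (sp_mono T xs h hspm hk), ?_⟩
      rintro w ⟨hw1, hw2⟩
      exact ⟨m, hspm, hw1, hw2⟩
    · have hmn : m < n := by
        by_contra hge
        push_neg at hge

        exact hvu (sp_unique T xs h (sp_mono T xs h hspm hge) hspn hvn)

      refine ⟨E, fun k hk => hva k (hk.trans hmn), ?_⟩
      rintro w ⟨hw1, hw2⟩
      refine ⟨n, hspn, by rw [iter_eq_of_eq hw1 hmn.le, hvn], ?_⟩
      intro k hk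
      rcases Nat.lt_or_ge k m with hkm | hkm
      · exact hw2 k hkm
      · rw [iter_eq_of_eq hw1 hkm]
        exact hva k hk

lemma cb_open {u : X} (hu : u ≠ xs) (hm : Minf T xs h u) :
    IsOp T xs h ((Vb T u ∅)ᶜ) := by
  intro v hv
  refine ⟨?_, ?_, ?_⟩
  · intro hvxs
    refine ⟨∅, by simp, {(0, u)}, by simpa using ⟨hu, hm⟩, ?_⟩
    intro w hw
    have := hw.2
    simp only [Finset.mem_singleton, Set.mem_iUnion] at this
    intro hmem
    exact this ⟨(0, u), rfl, by simpa using hmem⟩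
  · intro hvne hminfv
    refine ⟨∅, by simp, ?_⟩
    rintro w ⟨n, hw1, -⟩ hwu
    obtain ⟨n', hw1', -⟩ := hwu
    apply hv
    have h1 : T^[max n n'] w = T^[max n n'] v := iter_eq_of_eq hw1 (le_max_left _ _)
    have h2 : T^[max n n'] w = T^[max n n'] u := iter_eq_of_eq hw1' (le_max_right _ _)
    exact ⟨max n n', h1 ▸ h2, fun k hk => by simp⟩
  · intro hvne hnmv m hspm
    refine ⟨∅, by simp, ?_⟩
    rintro w ⟨hw1, -⟩ hwu
    obtain ⟨n', hw1', -⟩ := hwu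
    apply hv
    have h1 : T^[max m n'] w = T^[max m n'] v := iter_eq_of_eq hw1 (le_max_left _ _)
    have h2 : T^[max m n'] w = T^[max m n'] u := iter_eq_of_eq hw1' (le_max_right _ _)
    exact ⟨max m n', h1 ▸ h2, fun k hk => by simp⟩


noncomputable def tau : TopologicalSpace X where
  IsOpen := IsOp T xs h
  isOpen_univ := by
    intro u _
    exact ⟨fun _ => ⟨∅, by simp, ∅, by simp, by simp⟩,
      fun _ _ => ⟨∅, by simp, by simp⟩,
      fun _ _ n _ => ⟨∅, by simp, by simp⟩⟩
  isOpen_inter := by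
    intro U V hU hV u hu
    obtain ⟨hU1, hU2, hU3⟩ := hU u hu.1
    obtain ⟨hV1, hV2, hV3⟩ := hV u hu.2
    refine ⟨?_, ?_, ?_⟩
    · intro hx
      obtain ⟨E1, hE1, P1, hP1, hsub1⟩ := hU1 hx
      obtain ⟨E2, hE2, P2, hP2, hsub2⟩ := hV1 hx
      refine ⟨E1 ∪ E2, by simp [hE1, hE2], P1 ∪ P2, ?_, ?_⟩
      · intro p hp
        rcases Finset.mem_union.1 hp with hp | hp
        exacts [hP1 p hp, hP2 p hp]
      · intro w hw
        have hw1 : w ∈ Nb T E1 := nb_anti T (fun x hx => Finset.mem_union_left _ hx) hw.1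
        have hw2 : w ∈ Nb T E2 := nb_anti T (fun x hx => Finset.mem_union_right _ hx) hw.1
        constructor
        · apply hsub1
          refine ⟨hw1, fun hmem => hw.2 ?_⟩
          rw [Set.mem_iUnion₂] at hmem ⊢
          obtain ⟨p, hp, hwp⟩ := hmem
          exact ⟨p, Finset.mem_union_left _ hp, hwp⟩
        · apply hsub2
          refine ⟨hw2, fun hmem => hw.2 ?_⟩
          rw [Set.mem_iUnion₂] at hmem ⊢
          obtain ⟨p, hp, hwp⟩ := hmem
          exact ⟨p, Finset.mem_union_right _ hp, hwp⟩
    · intro hne hm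
      obtain ⟨E1, hE1, hsub1⟩ := hU2 hne hm
      obtain ⟨E2, hE2, hsub2⟩ := hV2 hne hm
      refine ⟨E1 ∪ E2, ?_, ?_⟩
      · intro k
        simp only [Finset.coe_union, Set.mem_union]
        exact fun hmem => hmem.elim (hE1 k) (hE2 k)
      · intro w hw
        exact ⟨hsub1 (vb_anti T (fun x hx => Finset.mem_union_left _ hx) hw),
          hsub2 (vb_anti T (fun x hx => Finset.mem_union_right _ hx) hw)⟩
    · intro hne hm n hsp
      obtain ⟨E1, hE1, hsub1⟩ := hU3 hne hm n hsp
      obtain ⟨E2, hE2, hsub2⟩ := hV3 hne hm n hsp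
      refine ⟨E1 ∪ E2, ?_, ?_⟩
      · intro k hk
        simp only [Finset.coe_union, Set.mem_union]
        exact fun hmem => hmem.elim (hE1 k hk) (hE2 k hk)
      · intro w hw
        exact ⟨hsub1 (win_anti T (fun x hx => Finset.mem_union_left _ hx) hw),
          hsub2 (win_anti T (fun x hx => Finset.mem_union_right _ hx) hw)⟩
  isOpen_sUnion := by
    intro S hS u hu
    obtain ⟨U, hUS, huU⟩ := hu
    obtain ⟨h1, h2, h3⟩ := hS U hUS u huU
    refine ⟨?_, ?_, ?_⟩
    · intro hx
      obtain ⟨E, hE, P, hP, hsub⟩ := h1 hx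
      exact ⟨E, hE, P, hP, hsub.trans (Set.subset_sUnion_of_mem hUS)⟩
    · intro hne hm
      obtain ⟨E, hE, hsub⟩ := h2 hne hm
      exact ⟨E, hE, hsub.trans (Set.subset_sUnion_of_mem hUS)⟩
    · intro hne hm n hsp
      obtain ⟨E, hE, hsub⟩ := h3 hne hm n hsp
      exact ⟨E, hE, hsub.trans (Set.subset_sUnion_of_mem hUS)⟩

include h in
lemma win_step {u v : X} {n : ℕ} {E : Finset X} (hn : 1 ≤ n)
    (hnx : ∀ m < n, T^[m] u ≠ xs)
    (hv : v ∈ Win T u n (E.erase u)) :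
    T v ∈ Win T (T u) (n - 1) E := by
  obtain ⟨hvn, hva⟩ := hv
  constructor
  · have e : n - 1 + 1 = n := by omega
    rw [← Function.iterate_succ_apply T (n - 1) v, ← Function.iterate_succ_apply T (n - 1) u,
      Nat.succ_eq_add_one, e]
    exact hvn
  · intro k hk
    have h1 : T^[k] (T v) = T^[k + 1] v := (Function.iterate_succ_apply T k v).symm
    rw [h1]
    have h2 := hva (k + 1) (by omega)
    rcases eq_or_ne (T^[k + 1] v) u with he | hne
    · exfalso
      have h3 : T^[n] v = T^[n - (k + 1)] u := by
        have e2 : n = (n - (k + 1)) + (k + 1) := by omega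
        rw [e2, Function.iterate_add_apply, he]
        rw [← e2]
      have h4 : T^[n - (k + 1)] u = T^[n] u := by rw [← h3, hvn]
      have h5 : T^[n - (k + 1)] u = xs := orbit_collapse h (by omega) h4
      exact hnx (n - (k + 1)) (by omega) h5
    · intro hmem
      exact h2 (Finset.mem_coe.2 (Finset.mem_erase.2 ⟨hne, Finset.mem_coe.1 hmem⟩))

lemma isop_preimage {U : Set X} (hU : IsOp T xs h U) : IsOp T xs h (T ⁻¹' U) := by
  intro u hu
  refine ⟨?_, ?_, ?_⟩
  · -- u = xs
    intro hx
    have hxsU : xs ∈ U := by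
      have : T u ∈ U := hu
      rwa [hx, fix_xs h] at this
    obtain ⟨E, hE, P, hP, hsub⟩ := (hU xs hxsU).1 rfl
    refine ⟨E, hE, P.image (fun p => (p.1 + 1, p.2)), ?_, ?_⟩
    · intro p hp
      obtain ⟨q, hq, rfl⟩ := Finset.mem_image.1 hp
      exact hP q hq
    · intro w hw
      have hstep : T w ∈ Nb T E \ ⋃ p ∈ P, T^[p.1] ⁻¹' (Vb T p.2 ∅) := by
        constructor
        · intro k
          rw [← Function.iterate_succ_apply T k w]
          exact hw.1 (k + 1)
        · intro hmem
          apply hw.2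
          rw [Set.mem_iUnion₂] at hmem ⊢
          obtain ⟨p, hp, hwp⟩ := hmem
          refine ⟨(p.1 + 1, p.2), Finset.mem_image.2 ⟨p, hp, rfl⟩, ?_⟩
          simp only [Set.mem_preimage] at hwp ⊢
          rwa [Function.iterate_succ_apply]
      exact hsub hstep
  · -- Minf u
    intro hune hm
    have hTune : T u ≠ xs := by
      intro he
      apply hune
      have h0 : u = zh T xs h (T u) := by simpa using hm 0
      rw [h0, he, zh_xs]
    have hTum : Minf T xs h (T u) := by
      have := minf_shift T xs h hm 1
      simpa using this
    obtain ⟨E, hEleg, hsub⟩ := (hU (T u) hu).2.1 hTune hTum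
    refine ⟨E.erase u, ?_, ?_⟩
    · intro k
      cases k with
      | zero => simp [Finset.notMem_erase]
      | succ k =>
        intro hmem
        have : T^[k + 1] u ∈ (E : Set X) := Finset.mem_coe.2 (Finset.erase_subset _ _ (Finset.mem_coe.1 hmem))
        rw [Function.iterate_succ_apply] at this
        exact hEleg k this
    · rintro v ⟨n, hvn, hva⟩
      cases n with
      | zero =>
        have : v = u := hvn
        rw [Set.mem_preimage, this]
        exact hu
      | succ n =>
        rw [Set.mem_preimage]
        apply hsub
        have hnx : ∀ m < n + 1, T^[m] u ≠ xs := fun m _ => minf_iter_ne_xs T xs h hm hune m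
        have hwin : T v ∈ Win T (T u) (n + 1 - 1) E :=
          win_step T xs h (by omega) hnx ⟨hvn, hva⟩
        simp only [Nat.add_sub_cancel] at hwin
        exact win_subset_vb T (T u) n E hwin
  · -- ¬ Minf u
    intro hune hnm n hsp
    cases n with
    | zero =>
      refine ⟨∅, by simp, ?_⟩
      rintro v ⟨hv0, -⟩
      have : v = u := hv0
      rw [Set.mem_preimage, this]
      exact hu
    | succ n =>
      have hTune : T u ≠ xs := by
        intro he
        apply hune
        have h0 : u = zh T xs h (T u) := by simpa using hsp 0 (by omega)
        rw [h0, he, zh_xs]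
      have hspTu : Sp T xs h (T u) n := by
        have := sp_shift T xs h hsp 1
        simpa using this
      have hnx : ∀ m < n + 1, T^[m] u ≠ xs := by
        intro m hm he
        exact hune (sp_ne_xs T xs h (sp_mono T xs h hsp (by omega)) he)
      by_cases hTum : Minf T xs h (T u)
      · obtain ⟨E, hEleg, hsub⟩ := (hU (T u) hu).2.1 hTune hTum
        refine ⟨E.erase u, ?_, ?_⟩
        · intro k hk
          cases k with
          | zero => simp [Finset.notMem_erase]
          | succ k =>
            intro hmem
            have : T^[k + 1] u ∈ (E : Set X) :=
              Finset.mem_coe.2 (Finset.erase_subset _ _ (Finset.mem_coe.1 hmem))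
            rw [Function.iterate_succ_apply] at this
            exact hEleg k this
        · intro v hv
          rw [Set.mem_preimage]
          apply hsub
          have hwin : T v ∈ Win T (T u) (n + 1 - 1) E := win_step T xs h (by omega) hnx hv
          simp only [Nat.add_sub_cancel] at hwin
          exact win_subset_vb T (T u) n E hwin
      · obtain ⟨E, hEleg, hsub⟩ := (hU (T u) hu).2.2 hTune hTum n hspTu
        refine ⟨E.erase u, ?_, ?_⟩
        · intro k hk
          cases k with
          | zero => simp [Finset.notMem_erase]
          | succ k =>
            intro hmem
            have : T^[k + 1] u ∈ (E : Set X) :=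
              Finset.mem_coe.2 (Finset.erase_subset _ _ (Finset.mem_coe.1 hmem))
            rw [Function.iterate_succ_apply] at this
            exact hEleg k (by omega) this
        · intro v hv
          rw [Set.mem_preimage]
          apply hsub
          have hwin : T v ∈ Win T (T u) (n + 1 - 1) E := win_step T xs h (by omega) hnx hv
          simpa only [Nat.add_sub_cancel] using hwin

lemma cont_T : @Continuous X X (tau T xs h) (tau T xs h) T := by
  rw [continuous_def]
  intro U hU
  exact isop_preimage T xs h hU


lemma not_minf_spec {u : X} (hnm : ¬ Minf T xs h u) :
    ∃ M, Sp T xs h u M ∧ T^[M] u ≠ zh T xs h (T^[M + 1] u) := by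
  unfold Minf at hnm
  push_neg at hnm
  refine ⟨Nat.find hnm, ?_, Nat.find_spec hnm⟩
  intro j hj
  have := Nat.find_min hnm hj
  simpa using this

lemma sp_le_of_step {u : X} {M n : ℕ} (hstep : T^[M] u ≠ zh T xs h (T^[M + 1] u))
    (hsp : Sp T xs h u n) : n ≤ M := by
  by_contra hc
  push_neg at hc
  exact hstep (hsp M hc)

lemma minf_of_spine {u : X} {M d : ℕ} (hSp : Sp T xs h u M) (hd : d ≤ M)
    (hm : Minf T xs h (T^[d] u)) : Minf T xs h u := by
  induction d with
  | zero => simpa using hm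
  | succ d ih =>
    refine ih (by omega) (minf_down T xs h hm ?_ ?_)
    · exact (Function.iterate_succ_apply' T d u).symm
    · exact hSp d (by omega)

lemma spine_above {u u' : X} {k M : ℕ} (hkM : M ≤ k)
    (hspU : Sp T xs h u M) (hspU' : Sp T xs h u' k)
    (he : T^[k] u' = T^[M] u) : u = T^[k - M] u' := by
  have h1 : Sp T xs h (T^[k - M] u') (k - (k - M)) := sp_shift T xs h hspU' (k - M)
  have h2 : k - (k - M) = M := by omega
  rw [h2] at h1
  have h3 : T^[M] (T^[k - M] u') = T^[k] u' := by
    rw [← Function.iterate_add_apply]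
    congr 1
    omega
  have hres := sp_eq_zh_iter T xs h h1
  rw [h3, he, ← sp_eq_zh_iter T xs h hspU] at hres
  exact hres.symm

lemma sep_xs_minf {u : X} (hune : u ≠ xs) (hm : Minf T xs h u) :
    ∃ U V : Set X, IsOp T xs h U ∧ IsOp T xs h V ∧ xs ∈ U ∧ u ∈ V ∧ Disjoint U V := by
  refine ⟨(Vb T u ∅)ᶜ, Vb T u ∅, cb_open T xs h hune hm,
    vb_open T xs h hune hm (by simp), xs_notMem_vb T xs h hune hm ∅,
    self_mem_vb T u ∅, disjoint_compl_left⟩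

lemma sep_xs_ob {u : X} (hune : u ≠ xs) (hnm : ¬ Minf T xs h u) :
    ∃ U V : Set X, IsOp T xs h U ∧ IsOp T xs h V ∧ xs ∈ U ∧ u ∈ V ∧ Disjoint U V := by
  obtain ⟨M, hsp, hstep⟩ := not_minf_spec T xs h hnm
  set c := T^[M] u with hc
  have hcx : c ≠ xs := fun he => hune (sp_ne_xs T xs h hsp he)
  refine ⟨Nb T {c}, Ob T xs h u ∅, nb_open T xs h (by simpa using (Ne.symm hcx)), 
    ob_open T xs h hune hnm (by simp), ?_, self_mem_ob T xs h u ∅, ?_⟩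
  · intro k
    rw [iter_fix_xs h]
    simpa using Ne.symm hcx
  · rw [Set.disjoint_left]
    rintro x hxN ⟨n, hspn, hxn, -⟩
    have hnM : n ≤ M := sp_le_of_step T xs h hstep hspn
    have : T^[M] x = c := by rw [iter_eq_of_eq hxn hnM]
    exact hxN M (by simpa using this)

lemma sep_minf_minf {u u' : X} (hune : u ≠ xs) (hune' : u' ≠ xs)
    (hm : Minf T xs h u) (hm' : Minf T xs h u') (hne : u ≠ u') :
    ∃ U V : Set X, IsOp T xs h U ∧ IsOp T xs h V ∧ u ∈ U ∧ u' ∈ V ∧ Disjoint U V := by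
  refine ⟨Vb T u ∅, Vb T u' ∅, vb_open T xs h hune hm (by simp),
    vb_open T xs h hune' hm' (by simp), self_mem_vb T u ∅, self_mem_vb T u' ∅, ?_⟩
  rw [Set.disjoint_left]
  rintro x ⟨n, hxn, -⟩ ⟨n', hxn', -⟩
  apply hne
  have e1 : T^[max n n'] x = T^[max n n'] u := iter_eq_of_eq hxn (le_max_left _ _)
  have e2 : T^[max n n'] x = T^[max n n'] u' := iter_eq_of_eq hxn' (le_max_right _ _)
  exact sp_unique T xs h (sp_of_minf T xs h hm _) (sp_of_minf T xs h hm' _) (e1 ▸ e2)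

lemma sep_ob_minf {u u' : X} (hune : u ≠ xs) (hune' : u' ≠ xs)
    (hnm : ¬ Minf T xs h u) (hm' : Minf T xs h u') (hne : u ≠ u') :
    ∃ U V : Set X, IsOp T xs h U ∧ IsOp T xs h V ∧ u ∈ U ∧ u' ∈ V ∧ Disjoint U V := by
  obtain ⟨M, hsp, hstep⟩ := not_minf_spec T xs h hnm
  set c := T^[M] u with hc
  have hleg : ∀ k, T^[k] u' ≠ c := by
    intro k hk
    rcases le_or_gt M k with hkM | hkM
    · have := spine_above T xs h hkM hsp (sp_of_minf T xs h hm' k) hk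
      rcases Nat.eq_or_lt_of_le hkM with heq | hlt
      · apply hne
        rw [this]
        have hz : k - M = 0 := by omega
        rw [hz]
        rfl
      · apply hnm
        rw [this]
        exact minf_shift T xs h hm' (k - M)
    · -- k < M : u' = T^[M-k] u, then Minf u via minf_of_spine
      have := spine_above T xs h hkM.le (sp_of_minf T xs h hm' k)
        hsp hk.symm
      apply hnm
      apply minf_of_spine T xs h hsp (d := M - k) (by omega)
      rw [← this]
      exact hm'
  refine ⟨Ob T xs h u ∅, Vb T u' {c}, ob_open T xs h hune hnm (by simp),
    vb_open T xs h hune' hm' (by intro k; simpa using hleg k), self_mem_ob T xs h u ∅,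
    self_mem_vb T u' _, ?_⟩
  rw [Set.disjoint_left]
  rintro x ⟨n, hspn, hxn, -⟩ ⟨n', hxn', havoid⟩
  have hnM : n ≤ M := sp_le_of_step T xs h hstep hspn
  have hMx : T^[M] x = c := by rw [iter_eq_of_eq hxn hnM]
  rcases le_or_gt n' M with hn'M | hn'M
  · have : T^[M] x = T^[M] u' := iter_eq_of_eq hxn' hn'M
    exact hleg M (by rw [← this, hMx])
  · exact havoid M hn'M (by simpa using hMx)

lemma sep_ob_ob_core {u u' : X} {M M' m₀ : ℕ}
    (hune : u ≠ xs) (hune' : u' ≠ xs) (hne : u ≠ u')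
    (hnm : ¬ Minf T xs h u) (hnm' : ¬ Minf T xs h u')
    (hsp : Sp T xs h u M) (hstep : T^[M] u ≠ zh T xs h (T^[M + 1] u))
    (hsp' : Sp T xs h u' M') (hstep' : T^[M'] u' ≠ zh T xs h (T^[M' + 1] u'))
    (hmerge : T^[m₀] u = T^[m₀] u')
    (hmin : ∀ j < m₀, T^[j] u ≠ T^[j] u')
    (h1 : m₀ ≤ M) (h2 : M' < m₀) :
    ∃ U V : Set X, IsOp T xs h U ∧ IsOp T xs h V ∧ u ∈ U ∧ u' ∈ V ∧ Disjoint U V := by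
  set c' := T^[M'] u' with hc'
  have hleg : ∀ k < M, T^[k] u ≠ c' := by
    intro k hkM hk
    rcases le_or_gt M' k with hkM' | hkM'
    · -- u' = T^[k - M'] u
      have hd := spine_above T xs h hkM' hsp' (sp_mono T xs h hsp hkM.le) hk
      rcases Nat.eq_or_lt_of_le hkM' with heq | hlt
      · apply hne
        rw [hd]
        have : k - M' = 0 := by omega
        rw [this]
        rfl
      · -- d ≥ 1, merge gives periodicity
        have hper : T^[m₀] u = T^[m₀ + (k - M')] u := by
          calc T^[m₀] u = T^[m₀] u' := hmerge
            _ = T^[m₀] (T^[k - M'] u) := by rw [← hd]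
            _ = T^[m₀ + (k - M')] u := by rw [← Function.iterate_add_apply]
        have hxs : T^[m₀] u = xs := orbit_collapse h (by omega) hper
        exact hune (sp_ne_xs T xs h (sp_mono T xs h hsp h1) hxs)
    · -- k < M' : u = T^[M' - k] u'
      have hd := spine_above T xs h hkM'.le (sp_mono T xs h hsp hkM.le) hsp' hk.symm
      have hper : T^[m₀] u' = T^[m₀ + (M' - k)] u' := by
        calc T^[m₀] u' = T^[m₀] u := hmerge.symm
          _ = T^[m₀] (T^[M' - k] u') := by rw [← hd]
          _ = T^[m₀ + (M' - k)] u' := by rw [← Function.iterate_add_apply]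
      have hxs : T^[m₀] u' = xs := orbit_collapse h (by omega) hper
      have : T^[m₀] u = xs := by rw [hmerge, hxs]
      exact hune (sp_ne_xs T xs h (sp_mono T xs h hsp h1) this)
  refine ⟨Ob T xs h u {c'}, Ob T xs h u' ∅, ?_, ob_open T xs h hune' hnm' (by simp),
    self_mem_ob T xs h u _, self_mem_ob T xs h u' ∅, ?_⟩
  · apply ob_open T xs h hune hnm
    intro k hspk
    have hkM : k + 1 ≤ M := sp_le_of_step T xs h hstep hspk
    simpa using hleg k (by omega)
  · rw [Set.disjoint_left]
    rintro x ⟨n, hspn, hxn, havoid⟩ ⟨n', hspn', hxn', -⟩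
    have hnM : n ≤ M := sp_le_of_step T xs h hstep hspn
    have hn'M : n' ≤ M' := sp_le_of_step T xs h hstep' hspn'
    rcases le_or_gt n n' with hnn | hnn
    · have e1 : T^[n'] x = T^[n'] u := iter_eq_of_eq hxn hnn
      have e2 : T^[n'] u = T^[n'] u' := by rw [← e1, hxn']
      exact hmin n' (by omega) e2
    · -- n' < n
      have hMx : T^[M'] x = c' := by rw [iter_eq_of_eq hxn' hn'M]
      rcases le_or_gt n M' with hnM' | hnM'
      · have e1 : T^[n] x = T^[n] u' := iter_eq_of_eq hxn' (by omega)
        have e2 : T^[n] u = T^[n] u' := by rw [← hxn, e1]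
        exact hmin n (by omega) e2
      · exact havoid M' hnM' (by simpa using hMx)

lemma sep_ob_ob {u u' : X} (hune : u ≠ xs) (hune' : u' ≠ xs)
    (hnm : ¬ Minf T xs h u) (hnm' : ¬ Minf T xs h u') (hne : u ≠ u') :
    ∃ U V : Set X, IsOp T xs h U ∧ IsOp T xs h V ∧ u ∈ U ∧ u' ∈ V ∧ Disjoint U V := by
  obtain ⟨M, hsp, hstep⟩ := not_minf_spec T xs h hnm
  obtain ⟨M', hsp', hstep'⟩ := not_minf_spec T xs h hnm'
  by_cases hmg : ∃ m, T^[m] u = T^[m] u'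
  · have hmerge := Nat.find_spec hmg
    have hmin : ∀ j < Nat.find hmg, T^[j] u ≠ T^[j] u' := fun j hj => Nat.find_min hmg hj
    set m₀ := Nat.find hmg with hm₀
    rcases le_or_gt m₀ M with h1 | h1 <;> rcases le_or_gt m₀ M' with h2 | h2
    · exact absurd (sp_unique T xs h (sp_mono T xs h hsp h1)
        (sp_mono T xs h hsp' h2) hmerge) hne
    · exact sep_ob_ob_core T xs h hune hune' hne hnm hnm' hsp hstep hsp' hstep' hmerge hmin h1 h2
    · obtain ⟨U, V, hU, hV, hmU, hmV, hd⟩ :=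
        sep_ob_ob_core T xs h hune' hune hne.symm hnm' hnm hsp' hstep' hsp hstep
          (by rw [hmerge]) (fun j hj he => hmin j hj he.symm) h2 h1
      exact ⟨V, U, hV, hU, hmV, hmU, hd.symm⟩
    · -- m₀ > both
      refine ⟨Ob T xs h u ∅, Ob T xs h u' ∅, ob_open T xs h hune hnm (by simp),
        ob_open T xs h hune' hnm' (by simp), self_mem_ob T xs h u ∅,
        self_mem_ob T xs h u' ∅, ?_⟩
      rw [Set.disjoint_left]
      rintro x ⟨n, hspn, hxn, -⟩ ⟨n', hspn', hxn', -⟩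
      have hnM : n ≤ M := sp_le_of_step T xs h hstep hspn
      have hn'M : n' ≤ M' := sp_le_of_step T xs h hstep' hspn'
      have e1 : T^[max n n'] x = T^[max n n'] u := iter_eq_of_eq hxn (le_max_left _ _)
      have e2 : T^[max n n'] x = T^[max n n'] u' := iter_eq_of_eq hxn' (le_max_right _ _)
      exact hmin (max n n') (by omega) (e1 ▸ e2)
  · push_neg at hmg
    refine ⟨Ob T xs h u ∅, Ob T xs h u' ∅, ob_open T xs h hune hnm (by simp),
      ob_open T xs h hune' hnm' (by simp), self_mem_ob T xs h u ∅,
      self_mem_ob T xs h u' ∅, ?_⟩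
    rw [Set.disjoint_left]
    rintro x ⟨n, hspn, hxn, -⟩ ⟨n', hspn', hxn', -⟩
    have e1 : T^[max n n'] x = T^[max n n'] u := iter_eq_of_eq hxn (le_max_left _ _)
    have e2 : T^[max n n'] x = T^[max n n'] u' := iter_eq_of_eq hxn' (le_max_right _ _)
    exact hmg (max n n') (e1 ▸ e2)

lemma sep_main {a b : X} (hne : a ≠ b) :
    ∃ U V : Set X, IsOp T xs h U ∧ IsOp T xs h V ∧ a ∈ U ∧ b ∈ V ∧ Disjoint U V := by
  by_cases hax : a = xs
  · have hbx : b ≠ xs := fun hb => hne (hax.trans hb.symm)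
    by_cases hbm : Minf T xs h b
    · obtain ⟨U, V, hU, hV, hmU, hmV, hd⟩ := sep_xs_minf T xs h hbx hbm
      exact ⟨U, V, hU, hV, hax ▸ hmU, hmV, hd⟩
    · obtain ⟨U, V, hU, hV, hmU, hmV, hd⟩ := sep_xs_ob T xs h hbx hbm
      exact ⟨U, V, hU, hV, hax ▸ hmU, hmV, hd⟩
  · by_cases hbx : b = xs
    · by_cases ham : Minf T xs h a
      · obtain ⟨U, V, hU, hV, hmU, hmV, hd⟩ := sep_xs_minf T xs h hax ham
        exact ⟨V, U, hV, hU, hmV, hbx ▸ hmU, hd.symm⟩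
      · obtain ⟨U, V, hU, hV, hmU, hmV, hd⟩ := sep_xs_ob T xs h hax ham
        exact ⟨V, U, hV, hU, hmV, hbx ▸ hmU, hd.symm⟩
    · by_cases ham : Minf T xs h a <;> by_cases hbm : Minf T xs h b
      · exact sep_minf_minf T xs h hax hbx ham hbm hne
      · obtain ⟨U, V, hU, hV, hmU, hmV, hd⟩ := sep_ob_minf T xs h hbx hax hbm ham hne.symm
        exact ⟨V, U, hV, hU, hmV, hmU, hd.symm⟩
      · exact sep_ob_minf T xs h hax hbx ham hbm hne
      · exact sep_ob_ob T xs h hax hbx ham hbm hne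

lemma t2_tau : @T2Space X (tau T xs h) := by
  letI := tau T xs h
  constructor
  intro a b hne
  obtain ⟨U, V, hU, hV, hmU, hmV, hd⟩ := sep_main T xs h hne
  exact ⟨U, V, hU, hV, hmU, hmV, hd⟩


lemma notmem_of_inter_empty (𝒰 : Ultrafilter X) {S A : Set X} (hA : A ∈ 𝒰)
    (hd : S ∩ A = ∅) : S ∉ 𝒰 := by
  intro hS
  have hm : S ∩ A ∈ 𝒰 := Filter.inter_mem hS hA
  rw [hd] at hm
  exact Ultrafilter.empty_notMem hm

lemma finset_biUnion_notMem (𝒰 : Ultrafilter X) {α : Type*} (s : Finset α)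
    (f : α → Set X) (hf : ∀ i ∈ s, f i ∉ 𝒰) : (⋃ i ∈ s, f i) ∉ 𝒰 := by
  classical
  induction s using Finset.induction with
  | empty =>
    simp only [Finset.notMem_empty, Set.iUnion_of_empty, Set.iUnion_empty]
    exact Ultrafilter.empty_notMem
  | @insert a s ha ih =>
    rw [Finset.set_biUnion_insert]
    intro hmem
    rcases Ultrafilter.union_mem_iff.1 hmem with h1 | h2
    · exact hf a (Finset.mem_insert_self a s) h1
    · exact ih (fun i hi => hf i (Finset.mem_insert_of_mem hi)) h2

include h in
lemma avoid_mem (𝒰 : Ultrafilter X) {e : X} (he : e ≠ xs)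
    (hsmall : ∀ k, {v : X | T^[k] v = e} ∉ 𝒰) : {v : X | ∀ k, T^[k] v ≠ e} ∈ 𝒰 := by
  obtain ⟨B, hB⟩ := exists_not_mem h he
  have hsub : (⋂ k ∈ Finset.range B, {v : X | T^[k] v ≠ e}) ⊆ {v : X | ∀ k, T^[k] v ≠ e} := by
    intro v hv k hk
    rcases Nat.lt_or_ge k B with hkB | hkB
    · exact (Set.mem_iInter₂.1 hv k (Finset.mem_range.2 hkB)) hk
    · exact hB (range_antitone T hkB ⟨v, hk⟩)
  refine Filter.mem_of_superset ?_ hsub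
  rw [Filter.biInter_finset_mem]
  intro k _
  have := (Ultrafilter.compl_mem_iff_notMem (f := 𝒰)).2 (hsmall k)
  simpa [Set.compl_setOf] using this

lemma le_nhds_of (𝒰 : Ultrafilter X) (x : X)
    (hx : ∀ U : Set X, IsOp T xs h U → x ∈ U → U ∈ 𝒰) :
    (𝒰 : Filter X) ≤ @nhds X (tau T xs h) x := by
  letI := tau T xs h
  intro s hs
  rw [mem_nhds_iff] at hs
  obtain ⟨t, hts, hto, hxt⟩ := hs
  exact Filter.mem_of_superset (hx t hto hxt) hts

lemma ultra_conv (𝒰 : Ultrafilter X) :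
    ∃ x : X, (𝒰 : Filter X) ≤ @nhds X (tau T xs h) x := by
  by_cases hpr : ∃ n : ℕ, ∃ c : X, {v : X | T^[n] v = c} ∈ 𝒰
  · -- some level is principal; take the least such level
    set n₀ := Nat.find hpr with hn₀
    obtain ⟨c₀, hc₀⟩ := Nat.find_spec hpr
    rw [← hn₀] at hc₀
    have hsmall : ∀ k < n₀, ∀ e : X, {v : X | T^[k] v = e} ∉ 𝒰 := by
      intro k hk e hmem
      exact Nat.find_min hpr hk ⟨e, hmem⟩
    rcases Nat.eq_zero_or_pos n₀ with hz | hpos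
    · -- principal ultrafilter: converges to c₀
      refine ⟨c₀, le_nhds_of T xs h 𝒰 c₀ ?_⟩
      intro U hUo hcU
      apply Filter.mem_of_superset hc₀
      intro v hv
      simp only [Set.mem_setOf_eq, hz, Function.iterate_zero, id_eq] at hv
      rw [hv]
      exact hcU
    · -- n₀ ≥ 1
      have hAne : ({v : X | T^[n₀] v = c₀} : Set X).Nonempty := Filter.nonempty_of_mem hc₀
      obtain ⟨v₀, hv₀⟩ := hAne
      have hc₀mem : c₀ ∈ Set.range (T^[n₀]) := ⟨v₀, hv₀⟩
      by_cases hcx : c₀ = xs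
      · -- converge to xs
        refine ⟨xs, le_nhds_of T xs h 𝒰 xs ?_⟩
        intro U hUo hxU
        obtain ⟨E, hE, P, hP, hsub⟩ := (hUo xs hxU).1 rfl
        have hsmall_all : ∀ e : X, e ≠ xs → ∀ k, {v : X | T^[k] v = e} ∉ 𝒰 := by
          intro e hexs k
          rcases Nat.lt_or_ge k n₀ with hk | hk
          · exact hsmall k hk e
          · apply notmem_of_inter_empty 𝒰 hc₀
            ext v
            simp only [Set.mem_inter_iff, Set.mem_setOf_eq, Set.mem_empty_iff_false,
              iff_false, not_and]
            intro hke hn₀v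
            apply hexs
            have hvx : T^[n₀] v = T^[n₀] xs := by
              rw [hn₀v, hcx, iter_fix_xs h]
            have hkx : T^[k] v = T^[k] xs := iter_eq_of_eq hvx hk
            rw [← hke, hkx, iter_fix_xs h]
        have hNb : Nb T E ∈ 𝒰 := by
          have hsub2 : (⋂ e ∈ E, {v : X | ∀ k, T^[k] v ≠ e}) ⊆ Nb T E := by
            intro v hv k hkE
            exact Set.mem_iInter₂.1 hv _ (Finset.mem_coe.1 hkE) k rfl
          refine Filter.mem_of_superset ?_ hsub2
          rw [Filter.biInter_finset_mem]
          intro e heE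
          exact avoid_mem T xs h 𝒰 (fun hh => hE (hh ▸ heE)) (hsmall_all e (fun hh => hE (hh ▸ heE)))
        have hD : ∀ p ∈ P, (T^[p.1] ⁻¹' Vb T p.2 ∅) ∉ 𝒰 := by
          intro p hpP hmem
          have hDA : (T^[p.1] ⁻¹' Vb T p.2 ∅) ∩ {v : X | T^[n₀] v = c₀} ⊆
              ⋃ m ∈ Finset.range n₀, {v : X | T^[m] v = T^[m - p.1] p.2} := by
            rintro v ⟨hvD, hvA⟩
            obtain ⟨n, hn, -⟩ := hvD
            have hvA' : T^[n₀] v = c₀ := hvA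
            have hnj : T^[n + p.1] v = T^[n] p.2 := by
              rw [Function.iterate_add_apply]
              exact hn
            have hlt : n + p.1 < n₀ := by
              by_contra hge
              push_neg at hge
              have hvx : T^[n₀] v = T^[n₀] xs := by rw [hvA', hcx, iter_fix_xs h]
              have hlift : T^[n + p.1] v = T^[n + p.1] xs := iter_eq_of_eq hvx hge
              rw [hnj, iter_fix_xs h] at hlift
              exact minf_iter_ne_xs T xs h (hP p hpP).2 (hP p hpP).1 n hlift
            rw [Set.mem_iUnion₂]
            refine ⟨n + p.1, Finset.mem_range.2 hlt, ?_⟩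
            simp only [Set.mem_setOf_eq, Nat.add_sub_cancel]
            exact hnj
          have hbig : (⋃ m ∈ Finset.range n₀, {v : X | T^[m] v = T^[m - p.1] p.2}) ∉ 𝒰 :=
            finset_biUnion_notMem 𝒰 _ _ (fun m hm => hsmall m (Finset.mem_range.1 hm) _)
          have hDAmem : (T^[p.1] ⁻¹' Vb T p.2 ∅) ∩ {v : X | T^[n₀] v = c₀} ∈ 𝒰 :=
            Filter.inter_mem hmem hc₀
          exact hbig (Filter.mem_of_superset hDAmem hDA)
        have hcompl : (⋃ p ∈ P, T^[p.1] ⁻¹' Vb T p.2 ∅)ᶜ ∈ 𝒰 :=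
          (Ultrafilter.compl_mem_iff_notMem (f := 𝒰)).2 (finset_biUnion_notMem 𝒰 _ _ hD)
        refine Filter.mem_of_superset (Filter.inter_mem hNb hcompl) ?_
        intro v hv
        exact hsub ⟨hv.1, hv.2⟩
      · -- c₀ ≠ xs : converge to u₀ = zh^[n₀] c₀
        obtain ⟨hd1, hd2⟩ := descent T xs h n₀ hc₀mem
        set u₀ := (zh T xs h)^[n₀] c₀ with hu₀
        have hu₀ne : u₀ ≠ xs := by
          intro heq
          apply hcx
          rw [← hd1, heq, iter_fix_xs h]
        have hwin_mem : ∀ E : Finset X, Win T u₀ n₀ E ∈ 𝒰 := by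
          intro E
          have hsub3 : {v : X | T^[n₀] v = c₀} ∩
              (⋂ e ∈ E, ⋂ k ∈ Finset.range n₀, {v : X | T^[k] v ≠ e}) ⊆ Win T u₀ n₀ E := by
            rintro v ⟨hvA, hvI⟩
            refine ⟨by rw [(hvA : T^[n₀] v = c₀), hd1], ?_⟩
            intro k hk hkE
            exact Set.mem_iInter₂.1 (Set.mem_iInter₂.1 hvI _ (Finset.mem_coe.1 hkE)) k
              (Finset.mem_range.2 hk) rfl
          refine Filter.mem_of_superset (Filter.inter_mem hc₀ ?_) hsub3
          rw [Filter.biInter_finset_mem]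
          intro e _
          rw [Filter.biInter_finset_mem]
          intro k hk
          have := (Ultrafilter.compl_mem_iff_notMem (f := 𝒰)).2
            (hsmall k (Finset.mem_range.1 hk) e)
          simpa [Set.compl_setOf] using this
        refine ⟨u₀, le_nhds_of T xs h 𝒰 u₀ ?_⟩
        intro U hUo huU
        by_cases hm : Minf T xs h u₀
        · obtain ⟨E, hEleg, hsub⟩ := (hUo u₀ huU).2.1 hu₀ne hm
          exact Filter.mem_of_superset (hwin_mem E) ((win_subset_vb T u₀ n₀ E).trans hsub)
        · obtain ⟨E, hEleg, hsub⟩ := (hUo u₀ huU).2.2 hu₀ne hm n₀ hd2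
          exact Filter.mem_of_superset (hwin_mem E) hsub
  · -- wild case
    push_neg at hpr
    by_cases htr : ∃ q : ℕ × X, (q.2 ≠ xs ∧ Minf T xs h q.2) ∧ (T^[q.1] ⁻¹' Vb T q.2 ∅) ∈ 𝒰
    · obtain ⟨⟨j, w⟩, ⟨hwxs, hwm⟩, hBin⟩ := htr
      have hBne : (T^[j] ⁻¹' Vb T w ∅).Nonempty := Filter.nonempty_of_mem hBin
      have hex : ∃ n : ℕ, ∃ v : X, T^[n + j] v = T^[n] w := by
        obtain ⟨v, hv⟩ := hBne
        obtain ⟨n, hn, -⟩ := hv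
        exact ⟨n, v, by rw [Function.iterate_add_apply]; exact hn⟩
      set n₁ := Nat.find hex with hn₁
      obtain ⟨va, hva⟩ := Nat.find_spec hex
      rw [← hn₁] at hva
      have hcmem : T^[n₁] w ∈ Set.range (T^[n₁ + j]) := ⟨va, hva⟩
      obtain ⟨hd1, hd2⟩ := descent T xs h (n₁ + j) hcmem
      set u₀ := (zh T xs h)^[n₁ + j] (T^[n₁] w) with hu₀
      have hu₀m : Minf T xs h u₀ :=
        descent_minf T xs h (n₁ + j) hcmem (minf_shift T xs h hwm n₁)
      have hu₀ne : u₀ ≠ xs := by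
        intro heq
        apply minf_iter_ne_xs T xs h hwm hwxs n₁
        rw [← hd1, heq, iter_fix_xs h]
      have hBxs : {v : X | ∀ k, T^[k] v ≠ xs} ∈ 𝒰 := by
        apply Filter.mem_of_superset hBin
        rintro v ⟨n, hn, -⟩ k hk
        have hnj : T^[n + j] v = T^[n] w := by
          rw [Function.iterate_add_apply]
          exact hn
        have hvx : T^[k] v = T^[k] xs := by rw [hk, iter_fix_xs h]
        have hst : T^[max k (n + j)] v = xs := by
          rw [iter_eq_of_eq hvx (le_max_left _ _), iter_fix_xs h]
        have hNv : T^[max k (n + j)] v = T^[(max k (n + j) - (n + j)) + n] w := by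
          calc T^[max k (n + j)] v = T^[max k (n + j) - (n + j)] (T^[n + j] v) := by
                rw [← Function.iterate_add_apply]
                congr 1
                omega
            _ = T^[max k (n + j) - (n + j)] (T^[n] w) := by rw [hnj]
            _ = T^[(max k (n + j) - (n + j)) + n] w := by rw [← Function.iterate_add_apply]
        rw [hst] at hNv
        exact minf_iter_ne_xs T xs h hwm hwxs _ hNv.symm
      refine ⟨u₀, le_nhds_of T xs h 𝒰 u₀ ?_⟩
      intro U hUo huU
      obtain ⟨E, hEleg, hsub⟩ := (hUo u₀ huU).2.1 hu₀ne hu₀m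
      have hVb : Vb T u₀ E ∈ 𝒰 := by
        have hsub4 : (T^[j] ⁻¹' Vb T w ∅) ∩ (⋂ e ∈ E, {v : X | ∀ k, T^[k] v ≠ e}) ⊆
            Vb T u₀ E := by
          rintro v ⟨⟨n, hn, -⟩, hvI⟩
          have hnj : T^[n + j] v = T^[n] w := by
            rw [Function.iterate_add_apply]
            exact hn
          have hn1 : n₁ ≤ n := Nat.find_min' hex ⟨v, hnj⟩
          refine ⟨n + j, ?_, ?_⟩
          · have hiu : T^[n + j] u₀ = T^[n] w := by
              have e1 : n + j = (n - n₁) + (n₁ + j) := by omega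
              rw [e1, Function.iterate_add_apply, hd1, ← Function.iterate_add_apply]
              congr 1
              omega
            rw [hnj, hiu]
          · intro k hk hkE
            exact (Set.mem_iInter₂.1 hvI _ (Finset.mem_coe.1 hkE)) k rfl
        refine Filter.mem_of_superset (Filter.inter_mem hBin ?_) hsub4
        rw [Filter.biInter_finset_mem]
        intro e heE
        by_cases hex2 : e = xs
        · rw [hex2]
          exact hBxs
        · exact avoid_mem T xs h 𝒰 hex2 (fun k => hpr k e)
      exact Filter.mem_of_superset hVb hsub
    · -- converge to xs
      push_neg at htr
      refine ⟨xs, le_nhds_of T xs h 𝒰 xs ?_⟩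
      intro U hUo hxU
      obtain ⟨E, hE, P, hP, hsub⟩ := (hUo xs hxU).1 rfl
      have hNb : Nb T E ∈ 𝒰 := by
        have hsub2 : (⋂ e ∈ E, {v : X | ∀ k, T^[k] v ≠ e}) ⊆ Nb T E := by
          intro v hv k hkE
          exact Set.mem_iInter₂.1 hv _ (Finset.mem_coe.1 hkE) k rfl
        refine Filter.mem_of_superset ?_ hsub2
        rw [Filter.biInter_finset_mem]
        intro e heE
        exact avoid_mem T xs h 𝒰 (fun hh => hE (hh ▸ heE)) (fun k => hpr k e)
      have hD : ∀ p ∈ P, (T^[p.1] ⁻¹' Vb T p.2 ∅) ∉ 𝒰 := fun p hpP =>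
        htr p (hP p hpP)
      have hcompl : (⋃ p ∈ P, T^[p.1] ⁻¹' Vb T p.2 ∅)ᶜ ∈ 𝒰 :=
        (Ultrafilter.compl_mem_iff_notMem (f := 𝒰)).2 (finset_biUnion_notMem 𝒰 _ _ hD)
      refine Filter.mem_of_superset (Filter.inter_mem hNb hcompl) ?_
      intro v hv
      exact hsub ⟨hv.1, hv.2⟩

lemma compact_tau : @CompactSpace X (tau T xs h) := by
  letI := tau T xs h
  constructor
  rw [isCompact_iff_ultrafilter_le_nhds]
  intro f _
  obtain ⟨x, hx⟩ := ultra_conv T xs h f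
  exact ⟨x, Set.mem_univ x, hx⟩

end

end MCompactAux

theorem main_compactification
    {X : Type*} (T : X → X) (xs : X)
    (h : (⋂ n : ℕ, T^[n] '' Set.univ) = {xs}) :
    ∃ t : TopologicalSpace X,
      @CompactSpace X t ∧ @T2Space X t ∧ @Continuous X X t t T := by
  exact ⟨MCompactAux.tau T xs h, MCompactAux.compact_tau T xs h,
    MCompactAux.t2_tau T xs h, MCompactAux.cont_T T xs h⟩
end
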